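/- arXiv:1902.05788 — 10 statements merged into one kernel-verified Lean document; each statement's English description precedes it below -/
import Mathlib

section
/- In a locally finitely presentable category, a cocone of monomorphisms (c_i : D_i ↪ C) over a filtered diagram D of monomorphisms is a colimit cocone of D if and only if the identity on C is the supremum of the subobjects c_i (i.e. the cocone is a union). -/
open CategoryTheory Limits Opposite Function

universe w v u

/-- An object is finitely presentable if its hom-functor preserves filtered colimits. -/
def IsFinitelyPresentable {C : Type u} [Category.{v} C] (A : C) : Prop :=
  ∀ (J : Type v) [SmallCategory J] [IsFiltered J] (Dg : J ⥤ C) (cc : Cocone Dg),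
    Nonempty (IsColimit cc) → Nonempty (IsColimit ((coyoneda.obj (op A)).mapCocone cc))

/-- A diagram of monomorphisms. -/
def MonoDiagram {C : Type u} [Category.{v} C] {J : Type*} [Category J] (Dg : J ⥤ C) : Prop :=
  ∀ ⦃i j : J⦄ (f : i ⟶ j), Mono (Dg.map f)

/-- A locally finitely presentable category. -/
def IsLFP (C : Type u) [Category.{v} C] : Prop :=
  HasColimits C ∧
  (∃ (ι : Type v) (G : ι → C), (∀ i, _root_.IsFinitelyPresentable (G i)) ∧
    ∀ X : C, _root_.IsFinitelyPresentable X → ∃ i, Nonempty (X ≅ G i)) ∧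
  ∀ X : C, ∃ (J : Type v) (_ : SmallCategory J) (_ : IsFiltered J) (Dg : J ⥤ C)
    (cc : Cocone Dg), (∀ j, _root_.IsFinitelyPresentable (Dg.obj j)) ∧ Nonempty (IsColimit cc) ∧
    Nonempty (cc.pt ≅ X)

/-
If the cocone is a colimit, the legs all factoring through a subobject `s` yields a
section of `s.arrow`, so `s = ⊤`. Conversely, compare with the colimit `L` of `Dg`: maps from a
finitely presentable object into `L` factor through some `Dg.obj j`, and since the legs of the
cocone are monic and `J` is filtered, the comparison `L ⟶ cc.pt` is cancellable against finitely
presentable objects, hence monic because every object is a filtered colimit of them. The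
subobject it represents contains every leg, so it is `⊤` and the comparison is an isomorphism.
-/

namespace IsFinitelyPresentable

variable {C : Type u} [Category.{v} C] {J : Type v} [SmallCategory J] [IsFiltered J]
  {Dg : J ⥤ C} {X : C}

theorem exists_factorization (hX : _root_.IsFinitelyPresentable X) {t : Cocone Dg}
    (ht : IsColimit t) (f : X ⟶ t.pt) : ∃ (j : J) (g : X ⟶ Dg.obj j), g ≫ t.ι.app j = f := by
  obtain ⟨hX⟩ := hX J Dg t ⟨ht⟩
  exact Types.jointly_surjective_of_isColimit hX f

theorem cancel_desc (hX : _root_.IsFinitelyPresentable X) {t : Cocone Dg}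
    (ht : IsColimit t) {cc : Cocone Dg} (hmono : ∀ j, Mono (cc.ι.app j)) {u v : X ⟶ t.pt}
    (huv : u ≫ ht.desc cc = v ≫ ht.desc cc) : u = v := by
  obtain ⟨j, u', rfl⟩ := hX.exists_factorization ht u
  obtain ⟨k, v', rfl⟩ := hX.exists_factorization ht v
  let l := IsFiltered.max j k
  have hu : u' ≫ t.ι.app j = (u' ≫ Dg.map (IsFiltered.leftToMax j k)) ≫ t.ι.app l := by
    rw [Category.assoc, t.w]
  have hv : v' ≫ t.ι.app k = (v' ≫ Dg.map (IsFiltered.rightToMax j k)) ≫ t.ι.app l := by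
    rw [Category.assoc, t.w]
  rw [hu, hv] at huv ⊢
  simp only [Category.assoc, ht.fac] at huv
  rw [← Category.assoc, ← Category.assoc v', cancel_mono] at huv
  rw [huv]

end IsFinitelyPresentable

namespace IsLFP

variable {C : Type u} [Category.{v} C]

theorem mono_of_cancel_finitelyPresentable (hC : IsLFP C) {Y Z : C} (f : Y ⟶ Z)
    (hf : ∀ X : C, _root_.IsFinitelyPresentable X → ∀ u v : X ⟶ Y, u ≫ f = v ≫ f → u = v) :
    Mono f where
  right_cancellation {W} u v huv := by
    obtain ⟨-, -, hpres⟩ := hC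
    obtain ⟨J', _, _, Dg', cc', hfp, ⟨hc'⟩, ⟨e⟩⟩ := hpres W
    refine (cancel_epi e.hom).mp (hc'.hom_ext fun i => ?_)
    simpa only [Category.assoc] using
      hf _ (hfp i) (cc'.ι.app i ≫ e.hom ≫ u) (cc'.ι.app i ≫ e.hom ≫ v)
        (by simp only [Category.assoc, huv])

theorem mono_desc (hC : IsLFP C) {J : Type v} [SmallCategory J] [IsFiltered J] {Dg : J ⥤ C}
    {t : Cocone Dg} (ht : IsColimit t) {cc : Cocone Dg} (hmono : ∀ j, Mono (cc.ι.app j)) :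
    Mono (ht.desc cc) :=
  hC.mono_of_cancel_finitelyPresentable _ fun _ hX _ _ => hX.cancel_desc ht hmono

end IsLFP

theorem CategoryTheory.Subobject.eq_top_of_isColimit_of_factors {C : Type u} [Category.{v} C]
    {J : Type*} [Category J] {Dg : J ⥤ C} {cc : Cocone Dg} (hc : IsColimit cc) (s : Subobject cc.pt)
    (hs : ∀ j, s.Factors (cc.ι.app j)) : s = ⊤ := by
  let d : Cocone Dg :=
    { pt := s
      ι :=
        { app := fun j => s.factorThru (cc.ι.app j) (hs j)
          naturality := fun i j f => by
            rw [← cancel_mono s.arrow]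
            simp [Subobject.factorThru_arrow] } }
  have : IsSplitEpi s.arrow := ⟨⟨⟨hc.desc d, hc.hom_ext fun j => by simp [d]⟩⟩⟩
  have : IsIso s.arrow := isIso_of_mono_of_isSplitEpi _
  exact (Subobject.isIso_arrow_iff_eq_top s).mp inferInstance

theorem stmt_0_general {C : Type u} [Category.{v} C] (hC : IsLFP C)
    {J : Type v} [SmallCategory J] [IsFiltered J] (Dg : J ⥤ C)
    (cc : Cocone Dg) (hmono : ∀ j : J, Mono (cc.ι.app j)) :
    Nonempty (IsColimit cc) ↔
      ∀ s : Subobject cc.pt,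
        (∀ j : J, @Subobject.mk C _ cc.pt (Dg.obj j) (cc.ι.app j) (hmono j) ≤ s) → s = ⊤ := by
  constructor
  · rintro ⟨hc⟩ s hs
    exact Subobject.eq_top_of_isColimit_of_factors hc s fun j =>
      Subobject.factors_of_le _ (hs j) (Subobject.mk_factors_self _)
  · intro hs
    have : HasColimits C := hC.1
    let φ := (colimit.isColimit Dg).desc cc
    have : Mono φ := hC.mono_desc _ hmono
    have : IsIso φ := (Subobject.isIso_iff_mk_eq_top φ).mpr <|
      hs _ fun j => Subobject.mk_le_mk_of_comm (colimit.ι Dg j) ((colimit.isColimit Dg).fac cc j)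
    exact ⟨IsColimit.ofPointIso (colimit.isColimit Dg)⟩

/-- In an lfp category, a cocone of monomorphisms over a filtered diagram of monomorphisms
is a colimit cocone iff it is a union, i.e. the identity on the cocone point is the
supremum of the subobjects given by the cocone legs. -/
theorem stmt_0 {C : Type u} [Category.{v} C] (hC : IsLFP C)
    {J : Type v} [SmallCategory J] [IsFiltered J] (Dg : J ⥤ C) (hD : MonoDiagram Dg)
    (cc : Cocone Dg) (hmono : ∀ j : J, Mono (cc.ι.app j)) :
    Nonempty (IsColimit cc) ↔
      ∀ s : Subobject cc.pt,
        (∀ j : J, @Subobject.mk C _ cc.pt (Dg.obj j) (cc.ι.app j) (hmono j) ≤ s) → s = ⊤ :=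
  stmt_0_general hC Dg cc hmono
end

section
/- Finitely generated objects collectively reflect filtered colimits of monomorphisms: in a locally finitely presentable category A, a cocone (c_i : D_i → C) over a filtered diagram D of monomorphisms is a colimit cocone if and only if for every finitely generated object A₀ of A, the cocone Hom(A₀, D_i) → Hom(A₀, C) is a colimit cocone in Set. -/
open CategoryTheory Limits Opposite Function

universe w v u

/-- An object is finitely generated if its hom-functor preserves filtered colimits of
monomorphisms. -/
def IsFinitelyGenerated {C : Type u} [Category.{v} C] (A : C) : Prop :=
  ∀ (J : Type v) [SmallCategory J] [IsFiltered J] (Dg : J ⥤ C), MonoDiagram Dg →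
    ∀ (cc : Cocone Dg),
      Nonempty (IsColimit cc) → Nonempty (IsColimit ((coyoneda.obj (op A)).mapCocone cc))

/-- A functor is finitary if it preserves filtered colimits. -/
def IsFinitary {C : Type u} [Category.{v} C] {B : Type w} [Category.{v} B] (F : C ⥤ B) : Prop :=
  ∀ (J : Type v) [SmallCategory J] [IsFiltered J] (Dg : J ⥤ C) (cc : Cocone Dg),
    Nonempty (IsColimit cc) → Nonempty (IsColimit (F.mapCocone cc))

/-- A functor preserves filtered colimits of monomorphisms. -/
def PreservesFilteredColimitsOfMonos {C : Type u} [Category.{v} C] {B : Type w} [Category.{v} B]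
    (F : C ⥤ B) : Prop :=
  ∀ (J : Type v) [SmallCategory J] [IsFiltered J] (Dg : J ⥤ C), MonoDiagram Dg →
    ∀ (cc : Cocone Dg), Nonempty (IsColimit cc) → Nonempty (IsColimit (F.mapCocone cc))

/-- A functor is finitely bounded if every finitely generated subobject of `F.obj A`
factorizes through the `F`-image of a finitely generated subobject of `A`. -/
def FinitelyBounded {C : Type u} [Category.{v} C] {B : Type w} [Category.{v} B]
    (F : C ⥤ B) : Prop :=
  ∀ (A : C) (M₀ : B) (m₀ : M₀ ⟶ F.obj A), Mono m₀ → IsFinitelyGenerated M₀ →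
    ∃ (M : C) (m : M ⟶ A), Mono m ∧ IsFinitelyGenerated M ∧
      ∃ g : M₀ ⟶ F.obj M, g ≫ F.map m = m₀

/-- A morphism is finitary if it factorizes through a finitely presentable object. -/
def FinitaryMorphism {C : Type u} [Category.{v} C] {X Y : C} (u : X ⟶ Y) : Prop :=
  ∃ (Z : C) (v : X ⟶ Z) (w : Z ⟶ Y), _root_.IsFinitelyPresentable Z ∧ v ≫ w = u

/-- A strictly locally finitely presentable category: every object has, for each
finitely generated subobject, a finitary endomorphism fixing that subobject. -/
def StrictlyLFP (C : Type u) [Category.{v} C] : Prop :=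
  IsLFP C ∧
  ∀ (A M : C) (m : M ⟶ A), Mono m → IsFinitelyGenerated M →
    ∃ u : A ⟶ A, FinitaryMorphism u ∧ m ≫ u = m

section
variable {C : Type u} [Category.{v} C]

lemma fp_fg {A : C} (h : _root_.IsFinitelyPresentable A) : IsFinitelyGenerated A :=
  fun J _ _ Dg _ cc hc => h J Dg cc hc

lemma isIso_of_fp_bijective (hC : IsLFP C) {X Y : C} (f : X ⟶ Y)
    (hf : ∀ (A : C), _root_.IsFinitelyPresentable A → Function.Bijective (fun u : A ⟶ X => u ≫ f)) :
    IsIso f := by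
  obtain ⟨J', _, _, D', d', hfp, ⟨hd'⟩, ⟨e⟩⟩ := hC.2.2 Y
  obtain ⟨J₂, _, _, D₂, d₂, hfp₂, ⟨hd₂⟩, ⟨e₂⟩⟩ := hC.2.2 X
  choose g hg using fun j => ((hf _ (hfp j)).2 (d'.ι.app j ≫ e.hom))
  have hg' : ∀ j, g j ≫ f = d'.ι.app j ≫ e.hom := hg
  have hcoc : ∀ {j k : J'} (α : j ⟶ k), D'.map α ≫ g k = g j := by
    intro j k α
    apply (hf _ (hfp j)).1
    show (D'.map α ≫ g k) ≫ f = g j ≫ f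
    rw [Category.assoc, hg' k, hg' j, ← Category.assoc, d'.w α]
  let cn : Cocone D' := ⟨X, { app := g, naturality := fun j k α => by simpa using hcoc α }⟩
  let s' : d'.pt ⟶ X := hd'.desc cn
  have hs' : ∀ j, d'.ι.app j ≫ s' = g j := fun j => hd'.fac _ j
  let s : Y ⟶ X := e.inv ≫ s'
  have hsf : s ≫ f = 𝟙 Y := by
    rw [← cancel_epi e.hom]
    apply hd'.hom_ext
    intro j
    have h1 : e.hom ≫ s = s' := by
      simp only [s, ← Category.assoc, Iso.hom_inv_id, Category.id_comp]
    have h2 : (d'.ι.app j ≫ e.hom) ≫ s = g j := by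
      rw [Category.assoc, h1, hs' j]
    rw [Category.comp_id, ← Category.assoc e.hom s f, h1, ← Category.assoc, hs' j, hg' j]
  have hfs : f ≫ s = 𝟙 X := by
    rw [← cancel_epi e₂.hom]
    apply hd₂.hom_ext
    intro k
    apply (hf _ (hfp₂ k)).1
    show (d₂.ι.app k ≫ e₂.hom ≫ f ≫ s) ≫ f = (d₂.ι.app k ≫ e₂.hom ≫ 𝟙 X) ≫ f
    simp only [Category.assoc, hsf, Category.comp_id, Category.id_comp]
  exact ⟨s, hfs, hsf⟩

end

/-- Finitely generated objects collectively reflect filtered colimits of monomorphisms. -/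
theorem stmt_2 {C : Type u} [Category.{v} C] (hC : IsLFP C)
    {J : Type v} [SmallCategory J] [IsFiltered J] (Dg : J ⥤ C) (hD : MonoDiagram Dg)
    (cc : Cocone Dg) :
    Nonempty (IsColimit cc) ↔
      ∀ A₀ : C, IsFinitelyGenerated A₀ →
        Nonempty (IsColimit ((coyoneda.obj (op A₀)).mapCocone cc)) := by
  constructor
  · rintro ⟨hc⟩ A₀ hA₀
    exact hA₀ J Dg hD cc ⟨hc⟩
  · intro h
    haveI := hC.1
    have hℓ : IsColimit (colimit.cocone Dg) := colimit.isColimit Dg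
    set f := hℓ.desc cc with hfdef
    have hbij : ∀ A : C, _root_.IsFinitelyPresentable A →
        Function.Bijective (fun u : A ⟶ (colimit.cocone Dg).pt => u ≫ f) := by
      intro A hA
      obtain ⟨h1⟩ := hA J Dg (colimit.cocone Dg) ⟨hℓ⟩
      obtain ⟨h2⟩ := h A (fp_fg hA)
      have heq : (coyoneda.obj (op A)).map f =
          (IsColimit.coconePointUniqueUpToIso h1 h2).hom := by
        apply h1.hom_ext
        intro j
        rw [IsColimit.comp_coconePointUniqueUpToIso_hom]
        ext u
        show (u ≫ (colimit.cocone Dg).ι.app j) ≫ f = u ≫ cc.ι.app j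
        rw [Category.assoc, hℓ.fac]
      have : IsIso ((coyoneda.obj (op A)).map f) := by
        rw [heq]; infer_instance
      refine (isIso_iff_bijective ((coyoneda.obj (op A)).map f)).mp ?_
      exact this
    haveI : IsIso f := isIso_of_fp_bijective hC f hbij
    exact ⟨IsColimit.ofPointIso hℓ⟩
end

section
/- A functor F : A → B between locally finitely presentable categories is finitary (preserves filtered colimits) if and only if for every object A of A, F preserves the colimit of the canonical filtered diagram of A, i.e. FA = colim of FP over the comma category of finitely presentable objects P equipped with a morphism P → A. -/
open CategoryTheory Limits Opposite Function

universe w v u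

/-- The canonical filtered diagram of an object `A`: the forgetful functor from the
comma category of finitely presentable objects equipped with a morphism into `A`. -/
def canonicalDiagram {C : Type u} [Category.{v} C] (A : C) :
    CostructuredArrow (ObjectProperty.ι (fun X : C => _root_.IsFinitelyPresentable X)) A ⥤ C :=
  CostructuredArrow.proj _ _ ⋙ ObjectProperty.ι _

/-- The canonical cocone over the canonical diagram of `A`, with point `A` and
injections given by the morphisms `p : P ⟶ A` themselves. -/
def canonicalCocone {C : Type u} [Category.{v} C] (A : C) : Cocone (canonicalDiagram A) where
  pt := A
  ι :=
    { app := fun p => p.hom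
      naturality := fun p q f => by
        have := CostructuredArrow.w f
        exact this.trans (Category.comp_id _).symm }


section Aux

variable {C : Type u} [Category.{v} C]

/-- A morphism from a finitely presentable object into a filtered colimit factors
through some object of the diagram. -/
lemma fp_factor {P : C} (hP : _root_.IsFinitelyPresentable P)
    {J : Type v} [SmallCategory J] [IsFiltered J] {Dg : J ⥤ C} {cc : Cocone Dg}
    (hc : IsColimit cc) (p : P ⟶ cc.pt) :
    ∃ (j : J) (f : P ⟶ Dg.obj j), f ≫ cc.ι.app j = p := by
  obtain ⟨hc'⟩ := hP J Dg cc ⟨hc⟩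
  obtain ⟨j, f, hf⟩ := Types.jointly_surjective _ hc' p
  exact ⟨j, f, hf⟩

/-- Two factorizations of the same morphism from a finitely presentable object
through a filtered colimit are identified further along the diagram. -/
lemma fp_eq {P : C} (hP : _root_.IsFinitelyPresentable P)
    {J : Type v} [SmallCategory J] [IsFiltered J] {Dg : J ⥤ C} {cc : Cocone Dg}
    (hc : IsColimit cc) {j₁ j₂ : J} (f₁ : P ⟶ Dg.obj j₁) (f₂ : P ⟶ Dg.obj j₂)
    (h : f₁ ≫ cc.ι.app j₁ = f₂ ≫ cc.ι.app j₂) :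
    ∃ (k : J) (u : j₁ ⟶ k) (v : j₂ ⟶ k), f₁ ≫ Dg.map u = f₂ ≫ Dg.map v := by
  obtain ⟨hc'⟩ := hP J Dg cc ⟨hc⟩
  have h' : ((coyoneda.obj (op P)).mapCocone cc).ι.app j₁ f₁ =
      ((coyoneda.obj (op P)).mapCocone cc).ι.app j₂ f₂ := h
  obtain ⟨k, u, v, huv⟩ :=
    (Types.FilteredColimit.isColimit_eq_iff (Dg ⋙ coyoneda.obj (op P)) hc').mp h'
  exact ⟨k, u, v, huv⟩

end Aux

/-- A functor between lfp categories is finitary iff it preserves the canonical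
colimit `A = colim D_A` for every object `A`. -/
theorem stmt_3 {C : Type u} [Category.{v} C] {B : Type w} [Category.{v} B]
    (hC : IsLFP C) (hB : IsLFP B) (F : C ⥤ B) :
    IsFinitary F ↔ ∀ A : C, Nonempty (IsColimit (F.mapCocone (canonicalCocone A))) := by
  constructor
  · -- Forward: a finitary functor preserves the canonical colimit.
    intro hF A
    obtain ⟨J, hJ1, hJ2, Dg, cc, hfp, ⟨hc⟩, ⟨e⟩⟩ := hC.2.2 A
    letI := hJ1; letI := hJ2
    -- transport the colimit cocone so that its point is literally `A`
    let cc' : Cocone Dg :=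
      { pt := A
        ι := { app := fun j => cc.ι.app j ≫ e.hom
               naturality := fun i j u => by
                 simp only [Functor.const_obj_obj, Functor.const_obj_map, Category.comp_id,
                   ← Category.assoc, cc.w u] } }
    have hc' : IsColimit cc' := hc.ofIsoColimit (Cocones.ext e (fun j => rfl))
    obtain ⟨hFc⟩ := hF J Dg cc' ⟨hc'⟩
    -- view each object of the diagram as an object of the comma category
    let d : J → CostructuredArrow
        (ObjectProperty.ι (fun X : C => _root_.IsFinitelyPresentable X)) A :=
      fun j => CostructuredArrow.mk (Y := ⟨Dg.obj j, hfp j⟩)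
        (show (ObjectProperty.ι (fun X : C => _root_.IsFinitelyPresentable X)).obj
          ⟨Dg.obj j, hfp j⟩ ⟶ A from cc'.ι.app j)
    -- restrict a cocone over the canonical diagram to a cocone over `Dg`
    let sc : Cocone (canonicalDiagram A ⋙ F) → Cocone (Dg ⋙ F) := fun s =>
      { pt := s.pt
        ι := { app := fun j => s.ι.app (d j)
               naturality := fun i j u => by
                 have := s.w (show d i ⟶ d j from CostructuredArrow.homMk (ObjectProperty.homMk (Dg.map u))
                   (by show Dg.map u ≫ cc.ι.app j ≫ e.hom = cc.ι.app i ≫ e.hom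
                       rw [← Category.assoc, cc.w u]))
                 exact this.trans (Category.comp_id _).symm } }
    refine ⟨{ desc := fun s => hFc.desc (sc s), fac := ?_, uniq := ?_ }⟩
    · intro s x
      obtain ⟨j, f, hf⟩ := fp_factor x.left.property hc' x.hom
      have hx : F.map f ≫ s.ι.app (d j) = s.ι.app x :=
        s.w (show x ⟶ d j from CostructuredArrow.homMk (ObjectProperty.homMk f) hf)
      calc (show F.obj x.left.obj ⟶ _ from (F.mapCocone (canonicalCocone A)).ι.app x ≫ hFc.desc (sc s))
          = F.map (f ≫ cc'.ι.app j) ≫ hFc.desc (sc s) := by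
            show F.map x.hom ≫ _ = _
            rw [hf]
        _ = F.map f ≫ (F.mapCocone cc').ι.app j ≫ hFc.desc (sc s) := by
            rw [F.map_comp, Category.assoc]; rfl
        _ = F.map f ≫ (sc s).ι.app j := by rw [hFc.fac (sc s) j]
        _ = (show F.obj x.left.obj ⟶ s.pt from s.ι.app x) := hx
    · intro s m hm
      exact hFc.uniq (sc s) m (fun j => hm (d j))
  · -- Backward: preservation of canonical colimits implies finitarity.
    rintro H J _ _ Dg cc ⟨hc⟩
    have HA := (H cc.pt).some
    choose jj ff hff using fun x : CostructuredArrow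
        (ObjectProperty.ι (fun X : C => _root_.IsFinitelyPresentable X)) cc.pt =>
      fp_factor x.left.property hc x.hom
    -- independence of the chosen factorization
    have key : ∀ (s : Cocone (Dg ⋙ F)) (x : CostructuredArrow
        (ObjectProperty.ι (fun X : C => _root_.IsFinitelyPresentable X)) cc.pt)
        (j' : J) (g : x.left.obj ⟶ Dg.obj j'), g ≫ cc.ι.app j' = x.hom →
        F.map g ≫ s.ι.app j' = F.map (ff x) ≫ s.ι.app (jj x) := by
      intro s x j' g hg
      obtain ⟨k, u, v, huv⟩ := fp_eq x.left.property hc g (ff x) (by rw [hg, hff x])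
      calc F.map g ≫ s.ι.app j'
          = F.map g ≫ F.map (Dg.map u) ≫ s.ι.app k := by
            rw [show F.map (Dg.map u) ≫ s.ι.app k = s.ι.app j' from s.w u]
        _ = F.map (g ≫ Dg.map u) ≫ s.ι.app k := by rw [F.map_comp, Category.assoc]
        _ = F.map (ff x ≫ Dg.map v) ≫ s.ι.app k := by rw [huv]
        _ = F.map (ff x) ≫ F.map (Dg.map v) ≫ s.ι.app k := by rw [F.map_comp, Category.assoc]
        _ = F.map (ff x) ≫ s.ι.app (jj x) := by
            rw [show F.map (Dg.map v) ≫ s.ι.app k = s.ι.app (jj x) from s.w v]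
    -- the induced cocone over the canonical diagram
    let mkc : Cocone (Dg ⋙ F) → Cocone (canonicalDiagram cc.pt ⋙ F) := fun s =>
      { pt := s.pt
        ι := { app := fun x => F.map (ff x) ≫ s.ι.app (jj x)
               naturality := fun x y h => by
                 have hw : (ObjectProperty.ι
                     (fun X : C => _root_.IsFinitelyPresentable X)).map h.left ≫ y.hom = x.hom := by
                   simpa using CostructuredArrow.w h
                 have hxy : ((ObjectProperty.ι
                     (fun X : C => _root_.IsFinitelyPresentable X)).map h.left ≫ ff y) ≫
                     cc.ι.app (jj y) = x.hom := by
                   rw [Category.assoc, hff y]; exact hw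
                 have hk := key s x (jj y) _ hxy
                 have h2 : F.map ((ObjectProperty.ι
                     (fun X : C => _root_.IsFinitelyPresentable X)).map h.left) ≫
                     F.map (ff y) ≫ s.ι.app (jj y) = F.map (ff x) ≫ s.ι.app (jj x) := by
                   rw [← hk, F.map_comp, Category.assoc]
                 exact h2.trans (Category.comp_id _).symm } }
    refine ⟨{ desc := fun s => HA.desc (mkc s), fac := ?_, uniq := ?_ }⟩
    · intro s j
      have Hj := (H (Dg.obj j)).some
      apply Hj.hom_ext
      intro y
      let x : CostructuredArrow
          (ObjectProperty.ι (fun X : C => _root_.IsFinitelyPresentable X)) cc.pt :=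
        CostructuredArrow.mk (Y := y.left)
          (show (ObjectProperty.ι (fun X : C => _root_.IsFinitelyPresentable X)).obj
            y.left ⟶ cc.pt from y.hom ≫ cc.ι.app j)
      have hfac : F.map x.hom ≫ HA.desc (mkc s) = F.map (ff x) ≫ s.ι.app (jj x) :=
        HA.fac (mkc s) x
      have hk : F.map y.hom ≫ s.ι.app j = F.map (ff x) ≫ s.ι.app (jj x) :=
        key s x j y.hom rfl
      show F.map y.hom ≫ F.map (cc.ι.app j) ≫ HA.desc (mkc s) = F.map y.hom ≫ s.ι.app j
      have e1 : F.map y.hom ≫ F.map (cc.ι.app j) = F.map x.hom := (F.map_comp _ _).symm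
      exact (Category.assoc _ _ _).symm.trans ((congrArg (fun t => t ≫ HA.desc (mkc s)) e1).trans (hfac.trans hk.symm))
    · intro s m hm
      refine HA.uniq (mkc s) m (fun x => ?_)
      calc (show F.obj x.left.obj ⟶ _ from (F.mapCocone (canonicalCocone cc.pt)).ι.app x ≫ m)
          = F.map (ff x ≫ cc.ι.app (jj x)) ≫ m := by
            show F.map x.hom ≫ m = _
            rw [hff x]
        _ = F.map (ff x) ≫ (F.mapCocone cc).ι.app (jj x) ≫ m := by
            rw [F.map_comp, Category.assoc]; rfl
        _ = F.map (ff x) ≫ s.ι.app (jj x) := by rw [hm (jj x)]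
end

section
/- Let F : A → B be a functor between locally finitely presentable categories that preserves monomorphisms. Then F is finitely bounded if and only if F preserves filtered colimits of monomorphisms. -/
open CategoryTheory Limits Opposite Function

universe w v u

namespace LFPProof

open CategoryTheory Limits Opposite

variable {C : Type u} [Category.{v} C]

/-- A chosen filtered presentation of an object by finitely presentable objects. -/
structure Pres (X : C) where
  J : Type v
  [cat : SmallCategory J]
  [filt : IsFiltered J]
  D : J ⥤ C
  cc : Cocone D
  fp : ∀ j, _root_.IsFinitelyPresentable (D.obj j)
  isColimit : IsColimit cc
  iso : cc.pt ≅ X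

attribute [instance] Pres.cat Pres.filt

/-- A bundled "lfp kit". -/
structure LFPKit (C : Type u) [Category.{v} C] where
  hasColimits : HasColimits C
  ι : Type v
  G : ι → C
  fpG : ∀ i, _root_.IsFinitelyPresentable (G i)
  rep : ∀ X : C, _root_.IsFinitelyPresentable X → ∃ i, Nonempty (X ≅ G i)
  pres : ∀ X : C, Pres X

theorem isLFP_nonempty_kit (h : IsLFP C) : Nonempty (LFPKit C) := by
  obtain ⟨h1, ⟨ι, G, hfp, hrep⟩, h3⟩ := h
  have pres : ∀ X : C, Nonempty (Pres X) := by
    intro X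
    obtain ⟨J, _, _, D, cc, hfp', ⟨t⟩, ⟨e⟩⟩ := h3 X
    exact ⟨⟨J, D, cc, hfp', t, e⟩⟩
  exact ⟨⟨h1, ι, G, hfp, hrep, fun X => (pres X).some⟩⟩

/-- Morphisms out of a finitely presentable object factor through a stage of any
filtered colimit. -/
theorem fp_factor {P : C} (hP : _root_.IsFinitelyPresentable P) {J : Type v} [SmallCategory J]
    [IsFiltered J] {D : J ⥤ C} {cc : Cocone D} (t : IsColimit cc) (f : P ⟶ cc.pt) :
    ∃ (j : J) (g : P ⟶ D.obj j), g ≫ cc.ι.app j = f := by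
  obtain ⟨tc⟩ := hP J D cc ⟨t⟩
  obtain ⟨j, y, hy⟩ := Types.jointly_surjective _ tc f
  exact ⟨j, y, hy⟩

/-- Morphisms out of a finitely generated object factor through a stage of any
filtered colimit of monomorphisms. -/
theorem fg_factor {P : C} (hP : IsFinitelyGenerated P) {J : Type v} [SmallCategory J]
    [IsFiltered J] {D : J ⥤ C} (hD : MonoDiagram D) {cc : Cocone D} (t : IsColimit cc)
    (f : P ⟶ cc.pt) : ∃ (j : J) (g : P ⟶ D.obj j), g ≫ cc.ι.app j = f := by
  obtain ⟨tc⟩ := hP J D hD cc ⟨t⟩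
  obtain ⟨j, y, hy⟩ := Types.jointly_surjective _ tc f
  exact ⟨j, y, hy⟩

theorem isFinitelyGenerated_of_isFinitelyPresentable {P : C} (hP : _root_.IsFinitelyPresentable P) :
    IsFinitelyGenerated P := fun J _ _ D _ cc hcc => hP J D cc hcc

/-- Finite generation transfers along isomorphisms. -/
theorem isFinitelyGenerated_of_iso {M M' : C} (e : M ≅ M') (h : IsFinitelyGenerated M) :
    IsFinitelyGenerated M' := by
  intro J _ _ D hD cc hcc
  obtain ⟨t⟩ := h J D hD cc hcc
  exact ⟨(IsColimit.mapCoconeEquiv (coyoneda.mapIso e.op).symm) t⟩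

theorem isFinitelyPresentable_of_iso {M M' : C} (e : M ≅ M') (h : _root_.IsFinitelyPresentable M) :
    _root_.IsFinitelyPresentable M' := by
  intro J _ _ D cc hcc
  obtain ⟨t⟩ := h J D cc hcc
  exact ⟨(IsColimit.mapCoconeEquiv (coyoneda.mapIso e.op).symm) t⟩

namespace LFPKit

/-- The generating family is jointly epimorphic. -/
theorem jointlyEpi (K : LFPKit C) {X Y : C} {f g : X ⟶ Y}
    (h : ∀ (i : K.ι) (u : K.G i ⟶ X), u ≫ f = u ≫ g) : f = g := by
  let P := K.pres X
  have : P.iso.hom ≫ f = P.iso.hom ≫ g := by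
    apply P.isColimit.hom_ext
    intro j
    obtain ⟨i, ⟨φ⟩⟩ := K.rep _ (P.fp j)
    have h2 := h i (φ.inv ≫ P.cc.ι.app j ≫ P.iso.hom)
    simp only [Category.assoc] at h2
    calc P.cc.ι.app j ≫ P.iso.hom ≫ f
        = φ.hom ≫ (φ.inv ≫ P.cc.ι.app j ≫ P.iso.hom ≫ f) := by simp
      _ = φ.hom ≫ (φ.inv ≫ P.cc.ι.app j ≫ P.iso.hom ≫ g) := by rw [h2]
      _ = P.cc.ι.app j ≫ P.iso.hom ≫ g := by simp
  calc f = P.iso.inv ≫ P.iso.hom ≫ f := by simp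
  _ = P.iso.inv ≫ P.iso.hom ≫ g := by rw [this]
  _ = g := by simp

/-- Colimit injections of filtered colimits of monomorphisms are monic. -/
theorem mono_ι (K : LFPKit C) {J : Type v} [SmallCategory J] [IsFiltered J] {D : J ⥤ C}
    (hD : MonoDiagram D) {cc : Cocone D} (t : IsColimit cc) (j : J) :
    Mono (cc.ι.app j) := by
  constructor
  intro X g h hgh
  apply K.jointlyEpi
  intro i u
  obtain ⟨tc⟩ := K.fpG i J D cc ⟨t⟩
  have heq : (u ≫ g) ≫ cc.ι.app j = (u ≫ h) ≫ cc.ι.app j := by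
    simp only [Category.assoc, hgh]
  -- interpret as equality of colimit classes in Type
  have : ∃ (k : J) (a : j ⟶ k) (b : j ⟶ k),
      (D ⋙ coyoneda.obj (op (K.G i))).map a (u ≫ g) =
      (D ⋙ coyoneda.obj (op (K.G i))).map b (u ≫ h) := by
    rw [← Types.FilteredColimit.isColimit_eq_iff _ tc]
    exact heq
  obtain ⟨k, a, b, hab⟩ := this
  have hab' : (u ≫ g) ≫ D.map a = (u ≫ h) ≫ D.map b := hab
  haveI hm : Mono (D.map (a ≫ IsFiltered.coeqHom a b)) := hD _
  have key : (u ≫ g) ≫ D.map (a ≫ IsFiltered.coeqHom a b) =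
      (u ≫ h) ≫ D.map (a ≫ IsFiltered.coeqHom a b) := by
    calc (u ≫ g) ≫ D.map (a ≫ IsFiltered.coeqHom a b)
        = ((u ≫ g) ≫ D.map a) ≫ D.map (IsFiltered.coeqHom a b) := by simp
      _ = ((u ≫ h) ≫ D.map b) ≫ D.map (IsFiltered.coeqHom a b) := by rw [hab']
      _ = (u ≫ h) ≫ D.map (b ≫ IsFiltered.coeqHom a b) := by simp
      _ = (u ≫ h) ≫ D.map (a ≫ IsFiltered.coeqHom a b) := by
          rw [← IsFiltered.coeq_condition]
  exact (cancel_mono _).mp key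

end LFPKit

end LFPProof
namespace LFPProof
open CategoryTheory Limits Opposite
variable {C : Type u} [Category.{v} C]
namespace LFPKit

/-- An object is finitely generated as soon as all its morphisms into filtered colimits of
monomorphisms factor through a stage. -/
theorem fg_of_factors (K : LFPKit C) {M : C}
    (hfac : ∀ (J : Type v) [SmallCategory J] [IsFiltered J] (D : J ⥤ C), MonoDiagram D →
      ∀ (cc : Cocone D), IsColimit cc → ∀ f : M ⟶ cc.pt,
        ∃ (j : J) (g : M ⟶ D.obj j), g ≫ cc.ι.app j = f) :
    IsFinitelyGenerated M := by
  intro J _ _ D hD cc hcc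
  obtain ⟨t⟩ := hcc
  refine ⟨Types.FilteredColimit.isColimitOf _ _ ?_ ?_⟩
  · intro f
    obtain ⟨j, g, hg⟩ := hfac J D hD cc t f
    exact ⟨j, g, hg.symm⟩
  · intro i j xi xj hx
    haveI := K.mono_ι hD t (IsFiltered.max i j)
    have : (xi ≫ D.map (IsFiltered.leftToMax i j)) ≫ cc.ι.app (IsFiltered.max i j) =
        (xj ≫ D.map (IsFiltered.rightToMax i j)) ≫ cc.ι.app (IsFiltered.max i j) := by
      simp only [Category.assoc, Cocone.w]
      exact hx
    exact ⟨IsFiltered.max i j, IsFiltered.leftToMax i j, IsFiltered.rightToMax i j,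
      (cancel_mono (cc.ι.app (IsFiltered.max i j))).mp this⟩

/-- Finitely generated objects are closed under binary coproducts. -/
theorem fg_coprod (K : LFPKit C) {M N : C} (hM : IsFinitelyGenerated M)
    (hN : IsFinitelyGenerated N) :
    haveI := K.hasColimits
    IsFinitelyGenerated (M ⨿ N) := by
  haveI := K.hasColimits
  apply K.fg_of_factors
  intro J _ _ D hD cc t f
  obtain ⟨j₁, g₁, hg₁⟩ := fg_factor hM hD t (coprod.inl ≫ f)
  obtain ⟨j₂, g₂, hg₂⟩ := fg_factor hN hD t (coprod.inr ≫ f)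
  refine ⟨IsFiltered.max j₁ j₂,
    coprod.desc (g₁ ≫ D.map (IsFiltered.leftToMax j₁ j₂))
      (g₂ ≫ D.map (IsFiltered.rightToMax j₁ j₂)), ?_⟩
  apply coprod.hom_ext
  · simp only [coprod.inl_desc_assoc, Category.assoc, Cocone.w]
    exact hg₁
  · simp only [coprod.inr_desc_assoc, Category.assoc, Cocone.w]
    exact hg₂

end LFPKit
end LFPProof
namespace LFPProof
open CategoryTheory Limits Opposite
variable {C : Type u} [Category.{v} C]
namespace LFPKit

/-- The small category of generators. -/
abbrev Gcat (K : LFPKit C) : Type v := InducedCategory C K.G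

/-- The restricted Yoneda embedding into presheaves on the generators. -/
noncomputable def emb (K : LFPKit C) : C ⥤ (K.Gcat)ᵒᵖ ⥤ Type v :=
  yoneda ⋙ (Functor.whiskeringLeft _ _ _).obj (inducedFunctor K.G).op

theorem emb_map_app (K : LFPKit C) {X Y : C} (f : X ⟶ Y) (i : K.Gcat) (u : K.G i ⟶ X) :
    (K.emb.map f).app (op i) u = u ≫ f := rfl

theorem emb_faithful (K : LFPKit C) : K.emb.Faithful := by
  constructor
  intro X Y f g h
  apply K.jointlyEpi
  intro i u
  have := congrArg (fun t => t.app (op (i : K.Gcat)) u) h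
  exact this

theorem emb_full (K : LFPKit C) : K.emb.Full := by
  constructor
  intro X Y η
  have hnat : ∀ (a b : K.Gcat) (u : K.G a ⟶ K.G b) (x : K.G b ⟶ X),
      η.app (op a) (u ≫ x) = u ≫ η.app (op b) x := by
    intro a b u x
    exact ConcreteCategory.congr_hom (η.naturality (InducedCategory.homMk u).op) x
  let P := K.pres X
  choose idx φn using fun j => K.rep _ (P.fp j)
  let φ := fun j => (φn j).some
  let xj : ∀ j : P.J, (K.G (idx j) ⟶ X) := fun j => (φ j).inv ≫ P.cc.ι.app j ≫ P.iso.hom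
  let s : Cocone P.D :=
    { pt := Y
      ι :=
        { app := fun j => (φ j).hom ≫ η.app (op (idx j)) (xj j)
          naturality := fun j k d => by
            have hu : ((φ j).inv ≫ P.D.map d ≫ (φ k).hom) ≫ xj k = xj j := by
              simp only [xj, Category.assoc, Iso.hom_inv_id_assoc]
              rw [← Category.assoc (P.D.map d), P.cc.w d]
            have := hnat _ _ ((φ j).inv ≫ P.D.map d ≫ (φ k).hom) (xj k)
            rw [hu] at this
            dsimp only [Functor.const_obj_obj, Functor.const_obj_map]
            rw [Category.comp_id, this]
            have e : ∀ (t : K.G (idx k) ⟶ Y), P.D.map d ≫ (φ k).hom ≫ t =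
                (φ j).hom ≫ ((φ j).inv ≫ P.D.map d ≫ (φ k).hom) ≫ t := fun t => by simp
            exact e _ } }
  refine ⟨P.iso.inv ≫ P.isColimit.desc s, ?_⟩
  apply NatTrans.ext
  funext o
  induction o using Opposite.rec with
  | op i =>
    ext (x : K.G i ⟶ X)
    show x ≫ (P.iso.inv ≫ P.isColimit.desc s) = η.app (op i) x
    obtain ⟨j, wmap, hw⟩ := fp_factor (K.fpG i) P.isColimit (x ≫ P.iso.inv)
    have fac := P.isColimit.fac s j
    calc x ≫ P.iso.inv ≫ P.isColimit.desc s
        = (x ≫ P.iso.inv) ≫ P.isColimit.desc s := by simp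
      _ = wmap ≫ P.cc.ι.app j ≫ P.isColimit.desc s := by rw [← hw]; simp
      _ = wmap ≫ (φ j).hom ≫ η.app (op (idx j)) (xj j) := by rw [fac]
      _ = (wmap ≫ (φ j).hom) ≫ η.app (op (idx j)) (xj j) := (Category.assoc _ _ _).symm
      _ = @id (K.G i ⟶ Y) (η.app (op i) ((wmap ≫ (φ j).hom) ≫ xj j)) := by rw [hnat]; rfl
      _ = @id (K.G i ⟶ Y) (η.app (op i) x) := by
          refine congrArg (fun y => @id (K.G i ⟶ Y) (η.app (op i) y)) ?_
          simp only [xj, Category.assoc, Iso.hom_inv_id_assoc]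
          rw [← Category.assoc wmap, hw]
          simp; rfl

theorem hasLimits (K : LFPKit C) : HasLimits C := by
  letI := K.hasColimits
  letI : K.emb.Full := K.emb_full
  letI : K.emb.Faithful := K.emb_faithful
  letI : Reflective K.emb :=
    { L := uliftYoneda.{v}.leftKanExtension (inducedFunctor K.G)
      adj := (Presheaf.uliftYonedaAdjunction.{v} _
        (uliftYoneda.{v}.leftKanExtensionUnit (inducedFunctor K.G))).ofNatIsoRight
        (NatIso.ofComponents (fun X => NatIso.ofComponents (fun _ => Equiv.ulift.toIso)
          (by intros; rfl)) (by intros; rfl)) }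
  exact hasLimits_of_reflective K.emb

/-- The generators form a detecting family. -/
theorem detecting (K : LFPKit C) : ObjectProperty.IsDetecting (ObjectProperty.ofObj K.G) := by
  intro X Y f hf
  have hf' : ∀ (i : K.ι) (h : K.G i ⟶ Y), ∃! h' : K.G i ⟶ X, h' ≫ f = h :=
    fun i h => hf _ (ObjectProperty.ofObj_apply K.G i) h
  let P := K.pres Y
  choose idx φn using fun j => K.rep _ (P.fp j)
  let φ := fun j => (φn j).some
  let yj : ∀ j : P.J, (K.G (idx j) ⟶ Y) := fun j => (φ j).inv ≫ P.cc.ι.app j ≫ P.iso.hom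
  choose l hl hlu using fun j => hf' (idx j) (yj j)
  let r : Cocone P.D :=
    { pt := X
      ι :=
        { app := fun j => (φ j).hom ≫ l j
          naturality := fun j k d => by
            have key : ((φ j).inv ≫ P.D.map d ≫ (φ k).hom) ≫ l k = l j := by
              apply hlu
              calc (((φ j).inv ≫ P.D.map d ≫ (φ k).hom) ≫ l k) ≫ f
                  = (φ j).inv ≫ P.D.map d ≫ (φ k).hom ≫ (l k ≫ f) := by simp
                _ = (φ j).inv ≫ P.D.map d ≫ (φ k).hom ≫ yj k := by rw [hl k]
                _ = yj j := by
                    simp only [yj, Category.assoc, Iso.hom_inv_id_assoc]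
                    rw [← Category.assoc (P.D.map d), P.cc.w d]
            dsimp only [Functor.const_obj_obj, Functor.const_obj_map]
            rw [Category.comp_id, ← key]
            simp } }
  let q : Y ⟶ X := P.iso.inv ≫ P.isColimit.desc r
  have hqf : q ≫ f = 𝟙 Y := by
    have : P.isColimit.desc r ≫ f = P.iso.hom := by
      apply P.isColimit.hom_ext
      intro j
      have fac := P.isColimit.fac r j
      calc P.cc.ι.app j ≫ P.isColimit.desc r ≫ f
          = (P.cc.ι.app j ≫ P.isColimit.desc r) ≫ f := by simp
        _ = ((φ j).hom ≫ l j) ≫ f := by rw [fac]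
        _ = (φ j).hom ≫ (l j ≫ f) := by simp
        _ = (φ j).hom ≫ yj j := by rw [hl j]
        _ = P.cc.ι.app j ≫ P.iso.hom := by simp [yj]
    simp only [q, Category.assoc, this]
    simp
  have hfq : f ≫ q = 𝟙 X := by
    apply K.jointlyEpi
    intro i u
    have h1 : (u ≫ f ≫ q) ≫ f = u ≫ f := by
      simp only [Category.assoc]
      rw [hqf]
      simp
    have hc := (hf' i (u ≫ f)).choose_spec
    have h2 : u ≫ f ≫ q = (hf' i (u ≫ f)).choose := hc.2 _ h1
    have h3 : u = (hf' i (u ≫ f)).choose := hc.2 u (by simp)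
    rw [Category.comp_id, h2, ← h3]
  exact ⟨⟨q, hfq, hqf⟩⟩

theorem small_subobject (K : LFPKit C) (X : C) : Small.{v} (Subobject X) := by
  letI := K.hasLimits
  haveI : WellPowered.{v} C := wellPowered_of_isDetecting K.detecting
  exact WellPowered.subobject_small X

end LFPKit
end LFPProof
namespace LFPProof
open CategoryTheory Limits Opposite
variable {C : Type u} [Category.{v} C]
namespace LFPKit

theorem eqToHom_arrow_sub {A : C} {S S' : Subobject A} (h : S = S') :
    eqToHom (congrArg (fun T : Subobject A => (T : C)) h) ≫ S'.arrow = S.arrow := by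
  cases h; simp

/-- Existence of images with finitely generated image object. -/
theorem exists_image (K : LFPKit C) {X A : C} (f : X ⟶ A) (hX : IsFinitelyGenerated X) :
    ∃ (I : C) (m : I ⟶ A) (e : X ⟶ I), Mono m ∧ IsFinitelyGenerated I ∧ e ≫ m = f ∧
      ∀ (T : C) (mT : T ⟶ A), Mono mT → (∃ w : X ⟶ T, w ≫ mT = f) →
        ∃ h : I ⟶ T, h ≫ mT = m := by
  letI := K.hasLimits
  haveI : Small.{v} (Subobject A) := K.small_subobject A
  haveI : Small.{v} {S : Subobject A // S.Factors f} :=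
    small_of_injective (Subtype.val_injective)
  let κ := Shrink.{v} {S : Subobject A // S.Factors f}
  let es : κ → {S : Subobject A // S.Factors f} := fun k => (equivShrink _).symm k
  let objs : κ → C := fun k => (((es k : Subobject A)) : C)
  let arrows : ∀ k, objs k ⟶ A := fun k => (es k : Subobject A).arrow
  let W := widePullback A objs arrows
  let m : W ⟶ A := WidePullback.base arrows
  haveI hmono : Mono m := by
    constructor
    intro Z g1 g2 hg
    apply WidePullback.hom_ext
    · intro k
      have h2 : (g1 ≫ WidePullback.π arrows k) ≫ arrows k =
          (g2 ≫ WidePullback.π arrows k) ≫ arrows k := by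
        simp only [Category.assoc, WidePullback.π_arrow]
        exact hg
      exact (cancel_mono (arrows k)).mp h2
    · exact hg
  let e : X ⟶ W := WidePullback.lift f (fun k => (es k : Subobject A).factorThru f (es k).2)
      (fun k => Subobject.factorThru_arrow _ _ _)
  have hem : e ≫ m = f := by apply WidePullback.lift_base
  have least : ∀ (T : C) (mT : T ⟶ A), Mono mT → (∃ w : X ⟶ T, w ≫ mT = f) →
      ∃ h : W ⟶ T, h ≫ mT = m := by
    intro T mT hmT hw
    obtain ⟨w, hwf⟩ := hw
    haveI := hmT
    have hFac : (Subobject.mk mT).Factors f := by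
      rw [Subobject.factors_iff]
      refine ⟨w ≫ (Subobject.underlyingIso mT).inv, ?_⟩
      show (w ≫ (Subobject.underlyingIso mT).inv) ≫ (Subobject.mk mT).arrow = f
      rw [Category.assoc, Subobject.underlyingIso_arrow, hwf]
    let k₀ : κ := equivShrink _ ⟨Subobject.mk mT, hFac⟩
    have hk : es k₀ = ⟨Subobject.mk mT, hFac⟩ := Equiv.symm_apply_apply _ _
    have hk' : (es k₀ : Subobject A) = Subobject.mk mT := congrArg Subtype.val hk
    refine ⟨WidePullback.π arrows k₀ ≫
      eqToHom (congrArg (fun T : Subobject A => (T : C)) hk') ≫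
      (Subobject.underlyingIso mT).hom, ?_⟩
    calc (WidePullback.π arrows k₀ ≫ eqToHom _ ≫ (Subobject.underlyingIso mT).hom) ≫ mT
        = WidePullback.π arrows k₀ ≫ eqToHom _ ≫
            ((Subobject.underlyingIso mT).hom ≫ mT) := by simp
      _ = WidePullback.π arrows k₀ ≫ eqToHom _ ≫ (Subobject.mk mT).arrow := by
          rw [Subobject.underlyingIso_hom_comp_eq_mk]
      _ = WidePullback.π arrows k₀ ≫ arrows k₀ := by rw [eqToHom_arrow_sub hk']
      _ = m := WidePullback.π_arrow _ _
  have hfg : IsFinitelyGenerated W := by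
    apply K.fg_of_factors
    intro J _ _ D hD cc t u
    obtain ⟨j, wmap, hwmap⟩ := fg_factor hX hD t (e ≫ u)
    haveI := K.mono_ι hD t j
    haveI : Mono (pullback.snd (cc.ι.app j) u) := inferInstance
    let lft : X ⟶ pullback (cc.ι.app j) u := pullback.lift wmap e hwmap
    haveI : Mono (pullback.snd (cc.ι.app j) u ≫ m) := mono_comp _ _
    obtain ⟨h, hh⟩ := least (pullback (cc.ι.app j) u) (pullback.snd (cc.ι.app j) u ≫ m)
      inferInstance ⟨lft, by simp only [lft, pullback.lift_snd_assoc, hem]⟩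
    have hsnd : h ≫ pullback.snd (cc.ι.app j) u = 𝟙 W := by
      have h2 : (h ≫ pullback.snd (cc.ι.app j) u) ≫ m = 𝟙 W ≫ m := by
        simpa only [Category.assoc, Category.id_comp] using hh
      exact (cancel_mono m).mp h2
    refine ⟨j, h ≫ pullback.fst (cc.ι.app j) u, ?_⟩
    calc (h ≫ pullback.fst (cc.ι.app j) u) ≫ cc.ι.app j
        = h ≫ (pullback.fst (cc.ι.app j) u ≫ cc.ι.app j) := by simp
      _ = h ≫ (pullback.snd (cc.ι.app j) u ≫ u) := by rw [pullback.condition]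
      _ = (h ≫ pullback.snd (cc.ι.app j) u) ≫ u := by simp
      _ = u := by rw [hsnd]; simp
  exact ⟨W, m, e, hmono, hfg, hem, least⟩

end LFPKit
end LFPProof
namespace LFPProof
open CategoryTheory Limits Opposite
variable {C : Type u} [Category.{v} C]
namespace LFPKit

theorem exists_fg_colimit (K : LFPKit C) (A : C) :
    ∃ (J : Type v) (_ : SmallCategory J) (_ : IsFiltered J) (D : J ⥤ C) (cc : Cocone D)
      (_ : IsColimit cc), MonoDiagram D ∧ cc.pt = A ∧ (∀ j, IsFinitelyGenerated (D.obj j)) ∧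
      ∀ j, Mono (cc.ι.app j) := by
  classical
  letI := K.hasColimits
  haveI : Small.{v} (Subobject A) := K.small_subobject A
  haveI : Small.{v} {S : Subobject A // IsFinitelyGenerated ((S : Subobject A) : C)} :=
    small_of_injective (Subtype.val_injective)
  let FGSub := {S : Subobject A // IsFinitelyGenerated ((S : Subobject A) : C)}
  let J := Shrink.{v} FGSub
  let σ : FGSub → J := fun T => equivShrink FGSub T
  let es : J → FGSub := fun j => (equivShrink FGSub).symm j
  have hes : ∀ T : FGSub, es (σ T) = T := fun T => Equiv.symm_apply_apply _ _
  letI : Preorder J := Preorder.lift (fun j => (es j).1)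
  letI : SmallCategory J := Preorder.smallCategory J
  -- the diagram of finitely generated subobjects
  let D : J ⥤ C :=
    { obj := fun j => ((es j).1 : C)
      map := fun {j k} g => Subobject.ofLE (es j).1 (es k).1 g.down.down
      map_id := fun j => by
        apply (cancel_mono (es j).1.arrow).mp
        rw [Subobject.ofLE_arrow]
        simp
      map_comp := fun {j k l} g h => by
        apply (cancel_mono (es l).1.arrow).mp
        rw [Subobject.ofLE_arrow]
        simp only [Category.assoc]
        rw [Subobject.ofLE_arrow, Subobject.ofLE_arrow] }
  have harrow : ∀ {j k : J} (g : j ⟶ k), D.map g ≫ (es k).1.arrow = (es j).1.arrow :=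
    fun {j k} g => Subobject.ofLE_arrow g.down.down
  let cc : Cocone D :=
    { pt := A
      ι :=
        { app := fun j => (es j).1.arrow
          naturality := fun j k g => by
            dsimp only [Functor.const_obj_obj, Functor.const_obj_map]
            rw [Category.comp_id]
            exact harrow g } }
  have hmonoD : MonoDiagram D := by
    intro j k g
    have : Mono (D.map g ≫ (es k).1.arrow) := by
      rw [harrow g]; infer_instance
    exact mono_of_mono (D.map g) (es k).1.arrow
  -- presentation of A and images
  let P := K.pres A
  let f : ∀ j' : P.J, P.D.obj j' ⟶ A := fun j' => P.cc.ι.app j' ≫ P.iso.hom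
  have him := fun j' => K.exists_image (f j')
    (isFinitelyGenerated_of_isFinitelyPresentable (P.fp j'))
  choose I mI eI hmonoI hfgI hfacI _ using him
  haveI : ∀ j', Mono (mI j') := hmonoI
  let Ifg : P.J → FGSub := fun j' =>
    ⟨Subobject.mk (mI j'), isFinitelyGenerated_of_iso (Subobject.underlyingIso (mI j')).symm
      (hfgI j')⟩
  -- nonempty & directed
  haveI : Nonempty J := ⟨σ (Ifg (IsFiltered.nonempty.some))⟩
  haveI : IsDirected J (· ≤ ·) := by
    constructor
    intro a b
    have hab := K.fg_coprod (es a).2 (es b).2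
    obtain ⟨Iu, mu, eu, hmu, hfgu, hfacu, _⟩ :=
      K.exists_image (coprod.desc (es a).1.arrow (es b).1.arrow) hab
    haveI := hmu
    let U : FGSub := ⟨Subobject.mk mu,
      isFinitelyGenerated_of_iso (Subobject.underlyingIso mu).symm hfgu⟩
    refine ⟨σ U, ?_, ?_⟩
    · show (es a).1 ≤ (es (σ U)).1
      rw [hes U]
      exact Subobject.le_mk_of_comm (coprod.inl ≫ eu) (by
        rw [Category.assoc, hfacu, coprod.inl_desc])
    · show (es b).1 ≤ (es (σ U)).1
      rw [hes U]
      exact Subobject.le_mk_of_comm (coprod.inr ≫ eu) (by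
        rw [Category.assoc, hfacu, coprod.inr_desc])
  haveI : IsFiltered J := inferInstance
  -- the comparison maps into the diagram
  let jj : P.J → J := fun j' => σ (Ifg j')
  let ebar : ∀ j', P.D.obj j' ⟶ D.obj (jj j') := fun j' =>
    eI j' ≫ (Subobject.underlyingIso (mI j')).inv ≫
      eqToHom (congrArg (fun S : Subobject A => (S : C))
        (congrArg Subtype.val (hes (Ifg j'))).symm)
  have hebar : ∀ j', ebar j' ≫ (es (jj j')).1.arrow = f j' := by
    intro j'
    have h1 : (Ifg j').1 = (es (jj j')).1 := (congrArg Subtype.val (hes (Ifg j'))).symm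
    calc ebar j' ≫ (es (jj j')).1.arrow
        = eI j' ≫ (Subobject.underlyingIso (mI j')).inv ≫
            (eqToHom (congrArg (fun S : Subobject A => (S : C)) h1) ≫
              (es (jj j')).1.arrow) := by
          simp only [ebar, Category.assoc]
      _ = eI j' ≫ (Subobject.underlyingIso (mI j')).inv ≫ (Subobject.mk (mI j')).arrow := by
          rw [eqToHom_arrow_sub h1]
      _ = eI j' ≫ mI j' := by rw [Subobject.underlyingIso_arrow]
      _ = f j' := hfacI j'
  -- key: comparing cocone components through joint bounds
  have key : ∀ (s : Cocone D) {Z : C} (j k : J) (uZ : Z ⟶ D.obj j) (wZ : Z ⟶ D.obj k),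
      uZ ≫ (es j).1.arrow = wZ ≫ (es k).1.arrow → uZ ≫ s.ι.app j = wZ ≫ s.ι.app k := by
    intro s Z j k uZ wZ h
    let a : j ⟶ IsFiltered.max j k := IsFiltered.leftToMax j k
    let b : k ⟶ IsFiltered.max j k := IsFiltered.rightToMax j k
    have h2 : uZ ≫ D.map a = wZ ≫ D.map b := by
      apply (cancel_mono (es (IsFiltered.max j k)).1.arrow).mp
      simp only [Category.assoc, harrow]
      exact h
    calc uZ ≫ s.ι.app j = uZ ≫ D.map a ≫ s.ι.app (IsFiltered.max j k) := by rw [s.w a]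
      _ = (uZ ≫ D.map a) ≫ s.ι.app (IsFiltered.max j k) := by simp
      _ = (wZ ≫ D.map b) ≫ s.ι.app (IsFiltered.max j k) := by rw [h2]
      _ = wZ ≫ D.map b ≫ s.ι.app (IsFiltered.max j k) := by simp
      _ = wZ ≫ s.ι.app k := by rw [s.w b]
  -- the cocone rs over the presentation, for each test cocone s
  let rs : ∀ s : Cocone D, Cocone P.D := fun s =>
    { pt := s.pt
      ι :=
        { app := fun j' => ebar j' ≫ s.ι.app (jj j')
          naturality := fun j' k' d => by
            dsimp only [Functor.const_obj_obj, Functor.const_obj_map]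
            rw [Category.comp_id]
            have harr : (P.D.map d ≫ ebar k') ≫ (es (jj k')).1.arrow =
                ebar j' ≫ (es (jj j')).1.arrow := by
              rw [Category.assoc, hebar k', hebar j']
              simp only [f]
              rw [← Category.assoc, P.cc.w d]
            have := key s (jj k') (jj j') (P.D.map d ≫ ebar k') (ebar j') harr
            simpa only [Category.assoc] using this } }
  have hrsfac : ∀ (s : Cocone D) (j' : P.J),
      P.cc.ι.app j' ≫ P.isColimit.desc (rs s) = ebar j' ≫ s.ι.app (jj j') :=
    fun s j' => P.isColimit.fac (rs s) j'
  refine ⟨J, inferInstance, inferInstance, D, cc, ?_, hmonoD, rfl, fun j => (es j).2,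
    fun j => inferInstance⟩
  -- IsColimit
  refine
    { desc := fun s => P.iso.inv ≫ P.isColimit.desc (rs s)
      fac := fun s j => ?_
      uniq := fun s m' hm' => ?_ }
  · -- (es j).1.arrow ≫ (iso.inv ≫ desc0) = s.ι.app j
    apply K.jointlyEpi
    intro i uG
    obtain ⟨j₁, wmap, hwmap⟩ := fp_factor (K.fpG i) P.isColimit
      (uG ≫ (es j).1.arrow ≫ P.iso.inv)
    have hl : uG ≫ cc.ι.app j ≫ P.iso.inv ≫ P.isColimit.desc (rs s) =
        (wmap ≫ ebar j₁) ≫ s.ι.app (jj j₁) := by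
      calc uG ≫ cc.ι.app j ≫ P.iso.inv ≫ P.isColimit.desc (rs s)
          = (uG ≫ (es j).1.arrow ≫ P.iso.inv) ≫ P.isColimit.desc (rs s) := by
            simp only [Category.assoc]; rfl
        _ = (wmap ≫ P.cc.ι.app j₁) ≫ P.isColimit.desc (rs s) := by rw [hwmap]
        _ = wmap ≫ P.cc.ι.app j₁ ≫ P.isColimit.desc (rs s) := by simp
        _ = wmap ≫ ebar j₁ ≫ s.ι.app (jj j₁) := by rw [hrsfac s j₁]
        _ = (wmap ≫ ebar j₁) ≫ s.ι.app (jj j₁) := by simp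
    have harr : (wmap ≫ ebar j₁) ≫ (es (jj j₁)).1.arrow = uG ≫ (es j).1.arrow := by
      rw [Category.assoc, hebar j₁]
      calc wmap ≫ f j₁ = wmap ≫ P.cc.ι.app j₁ ≫ P.iso.hom := rfl
        _ = (wmap ≫ P.cc.ι.app j₁) ≫ P.iso.hom := by simp
        _ = (uG ≫ (es j).1.arrow ≫ P.iso.inv) ≫ P.iso.hom := by rw [hwmap]
        _ = uG ≫ (es j).1.arrow := by simp
    have := key s (jj j₁) j (wmap ≫ ebar j₁) uG harr
    rw [← this, ← hl]
  · -- uniqueness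
    have h0 : P.iso.hom ≫ m' = P.isColimit.desc (rs s) := by
      apply P.isColimit.hom_ext
      intro j'
      calc P.cc.ι.app j' ≫ P.iso.hom ≫ m'
          = (ebar j' ≫ (es (jj j')).1.arrow) ≫ m' := by
            rw [hebar j']
            simp only [f, Category.assoc]
        _ = ebar j' ≫ cc.ι.app (jj j') ≫ m' := by simp only [Category.assoc]; rfl
        _ = ebar j' ≫ s.ι.app (jj j') := by rw [hm' (jj j')]
        _ = P.cc.ι.app j' ≫ P.isColimit.desc (rs s) := (hrsfac s j').symm
    calc m' = P.iso.inv ≫ P.iso.hom ≫ m' := by simp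
      _ = P.iso.inv ≫ P.isColimit.desc (rs s) := by rw [h0]

end LFPKit
end LFPProof
/-- A monomorphism-preserving functor between lfp categories is finitely bounded
iff it preserves filtered colimits of monomorphisms. -/
theorem stmt_6 {C : Type u} [Category.{v} C] {B : Type w} [Category.{v} B]
    (hC : IsLFP C) (hB : IsLFP B) (F : C ⥤ B) [F.PreservesMonomorphisms] :
    FinitelyBounded F ↔ PreservesFilteredColimitsOfMonos F := by
  obtain ⟨KC⟩ := LFPProof.isLFP_nonempty_kit hC
  obtain ⟨KB⟩ := LFPProof.isLFP_nonempty_kit hB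
  constructor
  · -- finitely bounded implies preservation
    intro hFB J _ _ Dg hD cc hcc
    obtain ⟨t⟩ := hcc
    letI := KB.hasColimits
    let c := colimit.cocone (Dg ⋙ F)
    let s := colimit.isColimit (Dg ⋙ F)
    let k : colimit (Dg ⋙ F) ⟶ F.obj cc.pt := colimit.desc (Dg ⋙ F) (F.mapCocone cc)
    have hstep : ∀ j : J, c.ι.app j ≫ k = F.map (cc.ι.app j) :=
      fun j => colimit.ι_desc (F.mapCocone cc) j
    have hcomp : ∀ {Z : B} (j : J) (x : Z ⟶ (Dg ⋙ F).obj j),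
        (x ≫ c.ι.app j) ≫ k = x ≫ F.map (cc.ι.app j) := by
      intro Z j x
      rw [Category.assoc, hstep j]
    have hinj : ∀ (i : KB.ι) (l₁ l₂ : KB.G i ⟶ colimit (Dg ⋙ F)),
        l₁ ≫ k = l₂ ≫ k → l₁ = l₂ := by
      intro i l₁ l₂ hl
      obtain ⟨tc⟩ := KB.fpG i J (Dg ⋙ F) c ⟨s⟩
      obtain ⟨j₁, w₁, hw₁⟩ := Types.jointly_surjective _ tc l₁
      obtain ⟨j₂, w₂, hw₂⟩ := Types.jointly_surjective _ tc l₂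
      have hw₁' : w₁ ≫ c.ι.app j₁ = l₁ := hw₁
      have hw₂' : w₂ ≫ c.ι.app j₂ = l₂ := hw₂
      have h1 : l₁ = (w₁ ≫ (Dg ⋙ F).map (IsFiltered.leftToMax j₁ j₂)) ≫
          c.ι.app (IsFiltered.max j₁ j₂) := by
        rw [Category.assoc, c.w (IsFiltered.leftToMax j₁ j₂)]
        exact hw₁'.symm
      have h2 : l₂ = (w₂ ≫ (Dg ⋙ F).map (IsFiltered.rightToMax j₁ j₂)) ≫
          c.ι.app (IsFiltered.max j₁ j₂) := by
        rw [Category.assoc, c.w (IsFiltered.rightToMax j₁ j₂)]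
        exact hw₂'.symm
      haveI := KC.mono_ι hD t (IsFiltered.max j₁ j₂)
      haveI : Mono (F.map (cc.ι.app (IsFiltered.max j₁ j₂))) := inferInstance
      have h3 : (w₁ ≫ (Dg ⋙ F).map (IsFiltered.leftToMax j₁ j₂)) ≫
            F.map (cc.ι.app (IsFiltered.max j₁ j₂)) =
          (w₂ ≫ (Dg ⋙ F).map (IsFiltered.rightToMax j₁ j₂)) ≫
            F.map (cc.ι.app (IsFiltered.max j₁ j₂)) := by
      -- via hl
        rw [← hcomp, ← hcomp, ← h1, ← h2]
        exact hl
      rw [h1, h2, (cancel_mono _).mp h3]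
    have hk : IsIso k := by
      apply KB.detecting
      rintro G' ⟨i⟩ h
      obtain ⟨I, mIm, eIm, hmono, hfgI, hfac, _⟩ := KB.exists_image h
        (LFPProof.isFinitelyGenerated_of_isFinitelyPresentable (KB.fpG i))
      obtain ⟨M, mM, hmM, hfgM, g, hg⟩ := hFB cc.pt I mIm hmono hfgI
      obtain ⟨j0, wmap, hw⟩ := LFPProof.fg_factor hfgM hD t mM
      refine ⟨eIm ≫ g ≫ F.map wmap ≫ colimit.ι (Dg ⋙ F) j0, ?_, ?_⟩
      · show (eIm ≫ g ≫ F.map wmap ≫ colimit.ι (Dg ⋙ F) j0) ≫ k = h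
        calc (eIm ≫ g ≫ F.map wmap ≫ colimit.ι (Dg ⋙ F) j0) ≫ k
            = eIm ≫ g ≫ F.map wmap ≫ (c.ι.app j0 ≫ k) := by simp only [Category.assoc]; rfl
          _ = eIm ≫ g ≫ F.map wmap ≫ F.map (cc.ι.app j0) := by rw [hstep j0]
          _ = eIm ≫ g ≫ F.map (wmap ≫ cc.ι.app j0) := by rw [F.map_comp]
          _ = eIm ≫ g ≫ F.map mM := by rw [hw]
          _ = eIm ≫ mIm := by rw [hg]
          _ = h := hfac
      · intro y hy
        apply hinj i
        rw [hy]
        show h = (eIm ≫ g ≫ F.map wmap ≫ colimit.ι (Dg ⋙ F) j0) ≫ k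
        calc h = eIm ≫ mIm := hfac.symm
          _ = eIm ≫ g ≫ F.map mM := by rw [hg]
          _ = eIm ≫ g ≫ F.map (wmap ≫ cc.ι.app j0) := by rw [hw]
          _ = eIm ≫ g ≫ F.map wmap ≫ F.map (cc.ι.app j0) := by rw [F.map_comp]
          _ = eIm ≫ g ≫ F.map wmap ≫ (c.ι.app j0 ≫ k) := by rw [hstep j0]
          _ = (eIm ≫ g ≫ F.map wmap ≫ colimit.ι (Dg ⋙ F) j0) ≫ k := by
              simp only [Category.assoc]; rfl
    haveI : IsIso ((colimit.isColimit (Dg ⋙ F)).desc (F.mapCocone cc)) := hk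
    exact ⟨IsColimit.ofPointIso (colimit.isColimit (Dg ⋙ F))⟩
  · -- preservation implies finitely bounded
    intro hP A M₀ m₀ hm₀ hfgM₀
    obtain ⟨J', sc, fil, D', cc', t', hmono, hpt, hfg, hι⟩ := KC.exists_fg_colimit A
    subst hpt
    letI := sc
    letI := fil
    have hmonoF : MonoDiagram (D' ⋙ F) := by
      intro i j g
      haveI := hmono g
      show Mono (F.map (D'.map g))
      infer_instance
    obtain ⟨tF⟩ := hP J' D' hmono cc' ⟨t'⟩
    obtain ⟨tM⟩ := hfgM₀ J' (D' ⋙ F) hmonoF (F.mapCocone cc') ⟨tF⟩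
    obtain ⟨j, g, hg⟩ := Types.jointly_surjective _ tM m₀
    have hg' : g ≫ F.map (cc'.ι.app j) = m₀ := hg
    exact ⟨D'.obj j, cc'.ι.app j, hι j, hfg j, g, hg'⟩
end

section
/- Let A be a locally finitely presentable category in which every finitely generated object is finitely presentable. Then every finitely bounded functor from A to a locally finitely presentable category that preserves monomorphisms is finitary, and conversely every finitary monomorphism-preserving functor is finitely bounded. -/
open CategoryTheory Limits Opposite Function

universe w v u

/-!
Every morphism of a locally finitely presentable category has a strong epi-mono factorisation:
coequalize all pairs of maps from the generators that the morphism identifies, and repeat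
`ω` times. The colimit maps monomorphically to the target, because a pair of maps from a finitely
presentable object into it factors through a stage and is coequalized at the next one. The image of a finitely presentable object is finitely generated, and every object is the
filtered union of the images of the stages of a presentation.

A finitary `F` sends such a union of `A` to a filtered colimit of monomorphisms, through one
stage of which a finitely generated subobject of `F A` factors. Conversely, for a finitely bounded
`F` and a filtered colimit `c` of `D`, the comparison `colim (D ⋙ F) ⟶ F c.pt` is bijective on maps
out of finitely presentable objects: a map into `F c.pt` factors through `F M` for a finitely
generated, hence finitely presentable, subobject `M` of `c.pt`, which factors through a stage.
-/

section FinitelyPresentable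

variable {C : Type u} [Category.{v} C]

theorem exists_comp_ι_eq_comp_ι {J : Type*} [Category J] [IsFiltered J] {D : J ⥤ C}
    (c : Cocone D) {P P' : C} {j j' : J} (g : P ⟶ D.obj j) (g' : P' ⟶ D.obj j') :
    ∃ (k : J) (h : P ⟶ D.obj k) (h' : P' ⟶ D.obj k), h ≫ c.ι.app k = g ≫ c.ι.app j ∧
      h' ≫ c.ι.app k = g' ≫ c.ι.app j' :=
  ⟨IsFiltered.max j j', g ≫ D.map (IsFiltered.leftToMax j j'),
    g' ≫ D.map (IsFiltered.rightToMax j j'), by simp, by simp⟩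

variable {P : C} {J : Type v} [SmallCategory J] [IsFiltered J] {D : J ⥤ C} {c : Cocone D}

theorem IsFinitelyPresentable.exists_hom_eq (hP : _root_.IsFinitelyPresentable P)
    (hc : IsColimit c) (f : P ⟶ c.pt) : ∃ (j : J) (g : P ⟶ D.obj j), g ≫ c.ι.app j = f := by
  obtain ⟨t⟩ := hP J D c ⟨hc⟩
  exact Types.jointly_surjective (D ⋙ coyoneda.obj (op P)) t f

theorem IsFinitelyPresentable.exists_hom_eq₂ (hP : _root_.IsFinitelyPresentable P)
    (hc : IsColimit c) (f f' : P ⟶ c.pt) :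
    ∃ (j : J) (g g' : P ⟶ D.obj j), g ≫ c.ι.app j = f ∧ g' ≫ c.ι.app j = f' := by
  obtain ⟨j, g, rfl⟩ := hP.exists_hom_eq hc f
  obtain ⟨j', g', rfl⟩ := hP.exists_hom_eq hc f'
  exact exists_comp_ι_eq_comp_ι c g g'

theorem IsFinitelyPresentable.exists_map_eq_map (hP : _root_.IsFinitelyPresentable P)
    (hc : IsColimit c) {j j' : J} (g : P ⟶ D.obj j) (g' : P ⟶ D.obj j')
    (h : g ≫ c.ι.app j = g' ≫ c.ι.app j') :
    ∃ (k : J) (α : j ⟶ k) (β : j' ⟶ k), g ≫ D.map α = g' ≫ D.map β := by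
  obtain ⟨t⟩ := hP J D c ⟨hc⟩
  exact (Types.FilteredColimit.isColimit_eq_iff (D ⋙ coyoneda.obj (op P)) t).mp h

theorem IsFinitelyGenerated.exists_hom_eq (hP : IsFinitelyGenerated P) (hD : MonoDiagram D)
    (hc : IsColimit c) (f : P ⟶ c.pt) : ∃ (j : J) (g : P ⟶ D.obj j), g ≫ c.ι.app j = f := by
  obtain ⟨t⟩ := hP J D hD c ⟨hc⟩
  exact Types.jointly_surjective (D ⋙ coyoneda.obj (op P)) t f

theorem MonoDiagram.comp {B : Type*} [Category B] {K : Type*} [Category K] {N : K ⥤ C}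
    (hN : MonoDiagram N) (F : C ⥤ B) [F.PreservesMonomorphisms] : MonoDiagram (N ⋙ F) :=
  fun _ _ f => haveI := hN f; F.map_mono (N.map f)

end FinitelyPresentable

abbrev HasFPColimitPresentations (C : Type u) [Category.{v} C] : Prop :=
  ∀ X : C, ∃ (J : Type v) (_ : SmallCategory J) (_ : IsFiltered J) (Dg : J ⥤ C)
    (cc : Cocone Dg), (∀ j, _root_.IsFinitelyPresentable (Dg.obj j)) ∧ Nonempty (IsColimit cc) ∧
    Nonempty (cc.pt ≅ X)

namespace HasFPColimitPresentations

variable {C : Type u} [Category.{v} C] (hC : HasFPColimitPresentations C)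
include hC

theorem hom_ext {X Y : C} {f g : X ⟶ Y}
    (h : ∀ (P : C), _root_.IsFinitelyPresentable P → ∀ p : P ⟶ X, p ≫ f = p ≫ g) : f = g := by
  obtain ⟨J, _, _, D, c, hD, ⟨hc⟩, ⟨e⟩⟩ := hC X
  rw [← cancel_epi e.hom]
  exact hc.hom_ext fun j => by simpa using h _ (hD j) (c.ι.app j ≫ e.hom)

theorem mono_of_cancel {X Y : C} (m : X ⟶ Y)
    (h : ∀ (P : C), _root_.IsFinitelyPresentable P → ∀ a b : P ⟶ X, a ≫ m = b ≫ m → a = b) :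
    Mono m :=
  ⟨fun u v huv => hC.hom_ext fun P hP p => h P hP _ _ (by simp only [Category.assoc, huv])⟩

theorem mono_ι {K : Type v} [SmallCategory K] [IsFiltered K] {E : K ⥤ C} (hE : MonoDiagram E)
    {c : Cocone E} (hc : IsColimit c) (k : K) : Mono (c.ι.app k) := by
  refine hC.mono_of_cancel _ fun P hP a b hab => ?_
  obtain ⟨k', α, β, h⟩ := hP.exists_map_eq_map hc a b hab
  have : Mono (E.map (α ≫ IsFiltered.coeqHom α β)) := hE _
  rw [← cancel_mono (E.map (α ≫ IsFiltered.coeqHom α β))]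
  calc a ≫ E.map (α ≫ IsFiltered.coeqHom α β)
      = b ≫ E.map (β ≫ IsFiltered.coeqHom α β) := by simp only [E.map_comp, reassoc_of% h]
    _ = b ≫ E.map (α ≫ IsFiltered.coeqHom α β) := by rw [IsFiltered.coeq_condition]

/-- The lifts come from orthogonality of `e` to the monic colimit injections. -/
theorem isFinitelyGenerated_of_strongEpi {X M : C} (e : X ⟶ M) [StrongEpi e]
    (hX : _root_.IsFinitelyPresentable X) : IsFinitelyGenerated M := by
  intro K _ _ E hE c ⟨hc⟩
  have := hC.mono_ι hE hc
  refine ⟨Types.FilteredColimit.isColimitOf _ _ (fun f => ?_) (fun k k' f f' hff => ?_)⟩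
  · obtain ⟨k, g, hg⟩ := hX.exists_hom_eq hc (e ≫ f)
    have sq : CommSq g e (c.ι.app k) f := ⟨hg⟩
    exact ⟨k, sq.lift, sq.fac_right.symm⟩
  · refine ⟨IsFiltered.max k k', IsFiltered.leftToMax k k', IsFiltered.rightToMax k k', ?_⟩
    change f ≫ E.map _ = f' ≫ E.map _
    rw [← cancel_mono (c.ι.app (IsFiltered.max k k'))]
    simpa using hff

theorem isIso_of_bijective {X Y : C} (u : X ⟶ Y)
    (surj : ∀ (P : C), _root_.IsFinitelyPresentable P → ∀ g : P ⟶ Y, ∃ f : P ⟶ X, f ≫ u = g)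
    (inj : ∀ (P : C), _root_.IsFinitelyPresentable P → ∀ a b : P ⟶ X, a ≫ u = b ≫ u → a = b) :
    IsIso u := by
  have := hC.mono_of_cancel u inj
  obtain ⟨J, _, _, D, c, hD, ⟨hc⟩, ⟨e⟩⟩ := hC Y
  choose l hl using fun j => surj _ (hD j) (c.ι.app j ≫ e.hom)
  let s : Cocone D :=
    { pt := X
      ι := { app := l, naturality := fun j j' f => by simp [← cancel_mono u, hl] } }
  have : IsSplitEpi u := ⟨⟨e.inv ≫ hc.desc s, by
    rw [Category.assoc, Iso.inv_comp_eq, Category.comp_id]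
    exact hc.hom_ext fun j => by simp [s, hl]⟩⟩
  exact isIso_of_mono_of_isSplitEpi u

end HasFPColimitPresentations

namespace QuotientTower

variable {C : Type u} [Category.{v} C] [HasColimits C] {ι : Type v} (G : ι → C) {A : C}

abbrev EqualizedPairs {X : C} (f : X ⟶ A) : Type v :=
  Σ i : ι, {p : (G i ⟶ X) × (G i ⟶ X) // p.1 ≫ f = p.2 ≫ f}

noncomputable def step (x : Over A) : Over A :=
  Over.mk (coequalizer.desc (f := Sigma.desc fun s : EqualizedPairs G x.hom => s.2.1.1)
    (g := Sigma.desc fun s : EqualizedPairs G x.hom => s.2.1.2) x.hom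
    (Sigma.hom_ext _ _ fun s => by simpa using s.2.2))

noncomputable def toStep (x : Over A) : x ⟶ step G x :=
  Over.homMk (coequalizer.π _ _) (coequalizer.π_desc _ _)

theorem toStep_coequalizes {x : Over A} {i : ι} {a b : G i ⟶ x.left}
    (h : a ≫ x.hom = b ≫ x.hom) : a ≫ (toStep G x).left = b ≫ (toStep G x).left := by
  have := Sigma.ι (fun s : EqualizedPairs G x.hom => G s.1) ⟨i, (a, b), h⟩ ≫=
    coequalizer.condition (Sigma.desc fun s : EqualizedPairs G x.hom => s.2.1.1)
      (Sigma.desc fun s : EqualizedPairs G x.hom => s.2.1.2)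
  simp only [colimit.ι_desc_assoc, Discrete.functor_obj_eq_as, Cofan.mk_pt, Cofan.mk_ι_app] at this
  exact this

theorem exists_toStep_comp {x : Over A} {W : C} (h : x.left ⟶ W)
    (hh : ∀ (i : ι) (a b : G i ⟶ x.left), a ≫ x.hom = b ≫ x.hom → a ≫ h = b ≫ h) :
    ∃ h' : (step G x).left ⟶ W, (toStep G x).left ≫ h' = h :=
  ⟨coequalizer.desc h (Sigma.hom_ext _ _ fun s => by simpa using hh s.1 _ _ s.2.2),
    coequalizer.π_desc _ _⟩

noncomputable def iter (x : Over A) : ℕ → Over A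
  | 0 => x
  | n + 1 => step G (iter x n)

noncomputable def tower (x : Over A) : ℕ ⥤ C :=
  Functor.ofSequence fun n => (toStep G (iter G x n)).left

variable (x : Over A)

noncomputable abbrev towerMap (n : ℕ) : (tower G x).obj n ⟶ (tower G x).obj (n + 1) :=
  (tower G x).map (homOfLE (n.le_add_right 1))

noncomputable abbrev towerHom (n : ℕ) : (tower G x).obj n ⟶ A := (iter G x n).hom

theorem towerMap_eq (n : ℕ) : towerMap G x n = (toStep G (iter G x n)).left :=
  Functor.ofSequence_map_homOfLE_succ _ n

instance (n : ℕ) : Epi (towerMap G x n) := by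
  rw [towerMap_eq]
  exact coequalizer.π_epi

theorem towerMap_towerHom (n : ℕ) : towerMap G x n ≫ towerHom G x (n + 1) = towerHom G x n := by
  rw [towerMap_eq]
  exact Over.w _

variable {G x}

theorem towerMap_coequalizes {n : ℕ} {i : ι} {a b : G i ⟶ (tower G x).obj n}
    (h : a ≫ towerHom G x n = b ≫ towerHom G x n) :
    a ≫ towerMap G x n = b ≫ towerMap G x n := by
  rw [towerMap_eq]
  exact toStep_coequalizes G h

theorem exists_towerMap_comp {n : ℕ} {W : C} (h : (tower G x).obj n ⟶ W)
    (hh : ∀ (i : ι) (a b : G i ⟶ (tower G x).obj n),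
      a ≫ towerHom G x n = b ≫ towerHom G x n → a ≫ h = b ≫ h) :
    ∃ h' : (tower G x).obj (n + 1) ⟶ W, towerMap G x n ≫ h' = h := by
  rw [towerMap_eq]
  exact exists_toStep_comp G h hh

theorem ι_succ (n : ℕ) :
    colimit.ι (tower G x) n = towerMap G x n ≫ colimit.ι (tower G x) (n + 1) :=
  (colimit.w _ _).symm

noncomputable def coconeOfCompat {W : C} (g : ∀ n, (tower G x).obj n ⟶ W)
    (hg : ∀ n, towerMap G x n ≫ g (n + 1) = g n) : Cocone (tower G x) where
  pt := W
  ι := NatTrans.ofSequence g fun n => by simpa using hg n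

variable (G x)

noncomputable def toTarget : colimit (tower G x) ⟶ A :=
  colimit.desc _ (coconeOfCompat (towerHom G x) (towerMap_towerHom G x))

theorem ι_toTarget (n : ℕ) : colimit.ι (tower G x) n ≫ toTarget G x = towerHom G x n :=
  colimit.ι_desc _ _

theorem ι_zero_toTarget : colimit.ι (tower G x) 0 ≫ toTarget G x = x.hom := ι_toTarget G x 0

variable {G x}

theorem ext_of_ι_zero_comp {W : C} {u v : colimit (tower G x) ⟶ W}
    (h : colimit.ι (tower G x) 0 ≫ u = colimit.ι (tower G x) 0 ≫ v) : u = v := by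
  refine colimit.hom_ext fun n => ?_
  induction n with
  | zero => exact h
  | succ n ih => rwa [ι_succ, Category.assoc, Category.assoc, cancel_epi] at ih

theorem exists_hom_eq₂ {P : C} (hP : _root_.IsFinitelyPresentable P)
    (a b : P ⟶ colimit (tower G x)) :
    ∃ (n : ℕ) (a' b' : P ⟶ (tower G x).obj n),
      a' ≫ colimit.ι (tower G x) n = a ∧ b' ≫ colimit.ι (tower G x) n = b := by
  obtain ⟨⟨n⟩, a', b', ha, hb⟩ := hP.exists_hom_eq₂
    ((colimit.isColimit (tower G x)).whiskerEquivalence ULift.orderIso.{v}.equivalence) a b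
  exact ⟨n, a', b', ha, hb⟩

variable (G) in
theorem mono_toTarget (hC : HasFPColimitPresentations C)
    (hrep : ∀ P : C, _root_.IsFinitelyPresentable P → ∃ i, Nonempty (P ≅ G i)) :
    Mono (toTarget G x) := by
  refine hC.mono_of_cancel _ fun P hP a b hab => ?_
  obtain ⟨n, a, b, rfl, rfl⟩ := exists_hom_eq₂ hP a b
  obtain ⟨i, ⟨e⟩⟩ := hrep P hP
  have h : (e.inv ≫ a) ≫ towerHom G x n = (e.inv ≫ b) ≫ towerHom G x n := by
    simpa [ι_toTarget] using e.inv ≫= hab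
  have := towerMap_coequalizes h
  simp only [Category.assoc, cancel_epi] at this
  rw [ι_succ, reassoc_of% this]

theorem hasLiftingProperty_ι_zero {Y Z : C} (ν : Y ⟶ Z) [Mono ν] :
    HasLiftingProperty (colimit.ι (tower G x) 0) ν := by
  refine ⟨fun {u v} sq => ?_⟩
  have lift : ∀ n, ∃ g : (tower G x).obj n ⟶ Y, g ≫ ν = colimit.ι (tower G x) n ≫ v := by
    intro n
    induction n with
    | zero => exact ⟨u, sq.w⟩
    | succ n ih =>
      obtain ⟨g, hg⟩ := ih
      obtain ⟨g', hg'⟩ := exists_towerMap_comp g fun i a b hab => by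
        rw [← cancel_mono ν, Category.assoc, Category.assoc, hg, ι_succ, Category.assoc,
          reassoc_of% (towerMap_coequalizes hab)]
      refine ⟨g', ?_⟩
      rw [← cancel_epi (towerMap G x n), reassoc_of% hg', hg, ι_succ, Category.assoc]
  choose g hg using lift
  let s := coconeOfCompat g fun n => by
    rw [← cancel_mono ν, Category.assoc, hg, hg, ι_succ n, Category.assoc]
  let l : colimit (tower G x) ⟶ Y := colimit.desc _ s
  have hfac : l ≫ ν = v := colimit.hom_ext fun n => by
    simp [l, s, coconeOfCompat, hg]
  exact ⟨⟨{ l := l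
            fac_left := by rw [← cancel_mono ν, Category.assoc, hfac, sq.w]
            fac_right := hfac }⟩⟩

theorem strongEpi_ι_zero : StrongEpi (colimit.ι (tower G x) 0) :=
  ⟨⟨fun _ _ => ext_of_ι_zero_comp⟩, fun _ _ ν _ => hasLiftingProperty_ι_zero ν⟩

end QuotientTower

theorem IsLFP.hasStrongEpiMonoFactorisations {C : Type u} [Category.{v} C] (hC : IsLFP C) :
    HasStrongEpiMonoFactorisations C := by
  obtain ⟨_, ⟨ι, G, -, hrep⟩, hpres⟩ := hC
  exact .mk fun f =>
    { I := colimit (QuotientTower.tower G (Over.mk f))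
      m := QuotientTower.toTarget G (Over.mk f)
      m_mono := QuotientTower.mono_toTarget G hpres hrep
      e := colimit.ι (QuotientTower.tower G (Over.mk f)) 0
      fac := QuotientTower.ι_zero_toTarget G (Over.mk f)
      e_strong_epi := QuotientTower.strongEpi_ι_zero }

section Union

variable {C : Type u} [Category.{v} C]

noncomputable abbrev subobjectCocone {K : Type*} [Category K] {X : C} (Φ : K ⥤ Subobject X) :
    Cocone (Φ ⋙ Subobject.underlying) where
  pt := X
  ι := { app k := (Φ.obj k).arrow }

theorem monoDiagram_subobject {K : Type*} [Category K] {X : C} (Φ : K ⥤ Subobject X) :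
    MonoDiagram (Φ ⋙ Subobject.underlying) :=
  fun _ _ f => mono_of_mono_fac (Subobject.underlying_arrow (Φ.map f))

theorem IsLFP.exists_union (hC : IsLFP C) (X : C) :
    ∃ (K : Type v) (_ : SmallCategory K) (_ : IsFiltered K) (Φ : K ⥤ Subobject X),
      (∀ k, IsFinitelyGenerated (Φ.obj k : C)) ∧ Nonempty (IsColimit (subobjectCocone Φ)) := by
  have := hC.hasStrongEpiMonoFactorisations
  obtain ⟨K, _, _, E, c, hE, ⟨hc⟩, ⟨e⟩⟩ := hC.2.2 X
  let g (k : K) : E.obj k ⟶ X := c.ι.app k ≫ e.hom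
  let Φ : K ⥤ Subobject X :=
    { obj k := imageSubobject (g k)
      map {k k'} f := homOfLE <| by
        simpa [g] using imageSubobject_comp_le (E.map f) (g k') }
  have (k : K) : StrongEpi (factorThruImageSubobject (g k)) := strongEpi_comp _ _
  have hΦ {k k' : K} (f : k ⟶ k') : E.map f ≫ factorThruImageSubobject (g k') =
      factorThruImageSubobject (g k) ≫ Subobject.underlying.map (Φ.map f) := by
    simp [← cancel_mono (Φ.obj k').arrow, Φ, g]
  refine ⟨K, inferInstance, inferInstance, Φ, fun k =>
    HasFPColimitPresentations.isFinitelyGenerated_of_strongEpi hC.2.2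
      (factorThruImageSubobject (g k)) (hE k),
    ⟨{ desc s := e.inv ≫ hc.desc
          { pt := s.pt
            ι := { app k := factorThruImageSubobject (g k) ≫ s.ι.app k
                   naturality k k' f := by simp [← s.w f, reassoc_of% hΦ f] } }
       fac s k := by simp [← cancel_epi (factorThruImageSubobject (g k)), Φ, g]
       uniq s m hm := (Iso.eq_inv_comp e).2 <| hc.hom_ext fun k => by simp [← hm k, Φ, g] }⟩⟩

end Union

section Functor

variable {C : Type u} [Category.{v} C] {B : Type w} [Category.{v} B] {F : C ⥤ B}

theorem IsFinitary.finitelyBounded [F.PreservesMonomorphisms] (hC : IsLFP C)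
    (hF : IsFinitary F) : FinitelyBounded F := by
  intro A M₀ m₀ _ hM₀
  obtain ⟨K, _, _, Φ, hΦ, ⟨hc⟩⟩ := hC.exists_union A
  obtain ⟨hFc⟩ := hF K _ _ ⟨hc⟩
  obtain ⟨k, g, hg⟩ := hM₀.exists_hom_eq ((monoDiagram_subobject Φ).comp F) hFc m₀
  exact ⟨Φ.obj k, (Φ.obj k).arrow, inferInstance, hΦ k, g, hg⟩

namespace FinitelyBounded

variable (hF : FinitelyBounded F) (hB : IsLFP B) {P : B} (hP : _root_.IsFinitelyPresentable P)
include hF hB hP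

theorem exists_subobject_factor {X : C} (g : P ⟶ F.obj X) :
    ∃ (M : C) (m : M ⟶ X), Mono m ∧ IsFinitelyGenerated M ∧
      ∃ g' : P ⟶ F.obj M, g' ≫ F.map m = g := by
  have := hB.hasStrongEpiMonoFactorisations
  obtain ⟨M, m, hm, hM, g', hg'⟩ := hF X _ (image.ι g) inferInstance
    (HasFPColimitPresentations.isFinitelyGenerated_of_strongEpi hB.2.2 (factorThruImage g) hP)
  exact ⟨M, m, hm, hM, factorThruImage g ≫ g', by simp [hg']⟩

variable (hC : IsLFP C) (hfgfp : ∀ X : C, IsFinitelyGenerated X → _root_.IsFinitelyPresentable X)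
include hC hfgfp

theorem exists_factor_pair {X : C} (x y : P ⟶ F.obj X) :
    ∃ (S : C) (n : S ⟶ X) (x' y' : P ⟶ F.obj S), _root_.IsFinitelyPresentable S ∧
      x' ≫ F.map n = x ∧ y' ≫ F.map n = y := by
  obtain ⟨K, _, _, Φ, hΦ, ⟨hc⟩⟩ := hC.exists_union X
  obtain ⟨Mx, mx, -, hMx, x', rfl⟩ := hF.exists_subobject_factor hB hP x
  obtain ⟨My, my, -, hMy, y', rfl⟩ := hF.exists_subobject_factor hB hP y
  obtain ⟨kx, wx, rfl⟩ := hMx.exists_hom_eq (monoDiagram_subobject Φ) hc mx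
  obtain ⟨ky, wy, rfl⟩ := hMy.exists_hom_eq (monoDiagram_subobject Φ) hc my
  obtain ⟨k, hx, hy, hxk, hyk⟩ := exists_comp_ι_eq_comp_ι (subobjectCocone Φ) wx wy
  exact ⟨Φ.obj k, (Φ.obj k).arrow, x' ≫ F.map hx, y' ≫ F.map hy, hfgfp _ (hΦ k),
    by rw [Category.assoc, ← F.map_comp, hxk], by rw [Category.assoc, ← F.map_comp, hyk]⟩

variable [F.PreservesMonomorphisms]

/-- `x` and `y` factor through `F S` with `S` finitely presentable; they agree on the image `W`
of `S` in `c.pt`, which is finitely presentable, so that `S → W → c.pt` is realised at a stage. -/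
theorem exists_map_eq_map {J : Type v} [SmallCategory J] [IsFiltered J] {D : J ⥤ C}
    {c : Cocone D} (hc : IsColimit c) {j : J} (x y : P ⟶ F.obj (D.obj j))
    (h : x ≫ F.map (c.ι.app j) = y ≫ F.map (c.ι.app j)) :
    ∃ (k : J) (α : j ⟶ k), x ≫ F.map (D.map α) = y ≫ F.map (D.map α) := by
  have := hC.hasStrongEpiMonoFactorisations
  obtain ⟨S, n, x, y, hS, rfl, rfl⟩ := hF.exists_factor_pair hB hP hC hfgfp x y
  set e := factorThruImage (n ≫ c.ι.app j)
  have hW : _root_.IsFinitelyPresentable (image (n ≫ c.ι.app j)) := hfgfp _ <|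
    HasFPColimitPresentations.isFinitelyGenerated_of_strongEpi hC.2.2 e hS
  have hxy : x ≫ F.map e = y ≫ F.map e := by
    rw [← cancel_mono (F.map (image.ι (n ≫ c.ι.app j)))]
    simpa only [Category.assoc, ← F.map_comp, e, image.fac] using h
  obtain ⟨j₁, r, hr⟩ := hW.exists_hom_eq hc (image.ι (n ≫ c.ι.app j))
  obtain ⟨k, α, β, hαβ⟩ := hS.exists_map_eq_map hc n (e ≫ r) (by simp [hr, e])
  have key : F.map n ≫ F.map (D.map α) = F.map e ≫ F.map (r ≫ D.map β) := by
    rw [← F.map_comp, ← F.map_comp, hαβ, Category.assoc]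
  exact ⟨k, α, by simp only [Category.assoc, key, reassoc_of% hxy]⟩

omit hP in
theorem isFinitary : IsFinitary F := by
  intro J _ _ D c ⟨hc⟩
  have := hB.1
  let φ := (colimit.isColimit (D ⋙ F)).desc (F.mapCocone c)
  suffices IsIso φ from ⟨IsColimit.ofPointIso (colimit.isColimit _)⟩
  refine HasFPColimitPresentations.isIso_of_bijective hB.2.2 φ (fun P hP g => ?_)
    (fun P hP a b hab => ?_)
  · obtain ⟨M, m, -, hM, g, rfl⟩ := hF.exists_subobject_factor hB hP g
    obtain ⟨j, w, rfl⟩ := (hfgfp M hM).exists_hom_eq hc m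
    exact ⟨g ≫ F.map w ≫ colimit.ι (D ⋙ F) j, by simp [φ]⟩
  · obtain ⟨j, a, b, rfl, rfl⟩ := hP.exists_hom_eq₂ (colimit.isColimit _) a b
    obtain ⟨k, α, h⟩ := hF.exists_map_eq_map hB hP hC hfgfp hc a b (by simpa [φ] using hab)
    simp only [colimit.cocone_ι, ← colimit.w (D ⋙ F) α, Functor.comp_map, reassoc_of% h]

end FinitelyBounded

end Functor

/-- If every finitely generated object of the lfp category `C` is finitely presentable,
then a monomorphism-preserving functor from `C` to an lfp category is finitary iff
it is finitely bounded. -/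
theorem stmt_7 {C : Type u} [Category.{v} C] {B : Type w} [Category.{v} B]
    (hC : IsLFP C) (hfgfp : ∀ X : C, IsFinitelyGenerated X → _root_.IsFinitelyPresentable X)
    (hB : IsLFP B) (F : C ⥤ B) [F.PreservesMonomorphisms] :
    IsFinitary F ↔ FinitelyBounded F :=
  ⟨fun hF => hF.finitelyBounded hC, fun hF => hF.isFinitary hB hC hfgfp⟩
end

section
/- If A is a locally finitely presentable category such that every monomorphism-preserving functor from A to a locally finitely presentable category is finitely bounded if and only if it is finitary, then every finitely generated object of A is finitely presentable. -/
open CategoryTheory Limits Opposite Function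

universe w v u

/-!
Apply the hypothesis to `Hom(A, -) : C ⥤ Type v`, which preserves monomorphisms; it remains to
show that it is finitely bounded when `A` is finitely generated. A finitely generated subobject
of `Hom(A, X)` is a finite set `M₀` of maps `A ⟶ X`, and the induced map `∐_{M₀} A ⟶ X` must be
factored through a finitely generated subobject of `X`. Starting from it, coequalize all pairs
of maps out of the finitely presentable generators `G i` that become equal in `X`, and repeat
`ω` times. Since each `G i` is finitely presentable, the colimit maps monomorphically to `X`;
since the leg out of `∐_{M₀} A` is a countable composite of regular epimorphisms, it lifts
against monomorphisms, and this carries finite generation from `∐_{M₀} A` to the colimit.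
-/

open Cardinal

attribute [local instance] Cardinal.fact_isRegular_aleph0

theorem isFinitelyPresentable_iff_isCardinalPresentable {C : Type u} [Category.{v} C] {A : C} :
    _root_.IsFinitelyPresentable A ↔ IsCardinalPresentable.{v} A ℵ₀ := by
  rw [← CategoryTheory.IsFinitelyPresentable,
    CategoryTheory.isFinitelyPresentable_iff_preservesFilteredColimits]
  exact ⟨fun hA ↦ ⟨fun _ _ _ ↦ ⟨fun {_} ↦ ⟨fun hc ↦ hA _ _ _ ⟨hc⟩⟩⟩⟩,
    fun _ _ _ _ _ _ ⟨hc⟩ ↦ ⟨isColimitOfPreserves _ hc⟩⟩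

namespace Types

theorem isFinitelyPresentable_iff_finite (K : Type v) :
    _root_.IsFinitelyPresentable K ↔ Finite K := by
  rw [isFinitelyPresentable_iff_isCardinalPresentable, Types.isCardinalPresentable_iff,
    hasCardinalLT_aleph0_iff]

theorem monoDiagram_hasCardinalLTSetFunctor (K : Type v) (κ : Cardinal.{v}) :
    MonoDiagram (HasCardinalLT.Set.functor K κ) := fun _ _ f ↦ by
  rw [mono_iff_injective]
  exact Set.inclusion_injective (leOfHom f)

theorem finite_of_isFinitelyGenerated {K : Type v} (hK : IsFinitelyGenerated K) : Finite K := by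
  obtain ⟨hc⟩ := hK _ _ (monoDiagram_hasCardinalLTSetFunctor K ℵ₀) _
    ⟨HasCardinalLT.Set.isColimitCocone K ℵ₀ le_rfl⟩
  obtain ⟨⟨S, hS⟩, (f : K ⟶ S), hf⟩ := Types.jointly_surjective_of_isColimit hc (𝟙 K)
  replace hf : ∀ x, (f x).val = x := ConcreteCategory.congr_hom hf
  rw [hasCardinalLT_aleph0_iff] at hS
  exact Finite.of_injective f fun x y hxy ↦ by
    rw [← hf x, ← hf y, hxy]

theorem isLFP : IsLFP (Type v) := by
  refine ⟨inferInstance, ⟨ULift.{v} ℕ, fun n ↦ ULift.{v} (Fin n.down), fun n ↦ ?_, fun K hK ↦ ?_⟩,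
    fun K ↦ ⟨_, _, inferInstance, _, _, fun S ↦ ?_, ⟨HasCardinalLT.Set.isColimitCocone K ℵ₀ le_rfl⟩,
      ⟨Iso.refl K⟩⟩⟩
  · exact (isFinitelyPresentable_iff_finite _).2 inferInstance
  · have := (isFinitelyPresentable_iff_finite K).1 hK
    exact ⟨⟨Nat.card K⟩, ⟨(Finite.equivFin K).trans Equiv.ulift.symm |>.toIso⟩⟩
  · rw [isFinitelyPresentable_iff_finite, ← hasCardinalLT_aleph0_iff]
    exact S.2

end Types

section Generators

variable {C : Type u} [Category.{v} C] {ι : Type v} {G : ι → C}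

theorem IsLFP.exists_isSeparating (hC : IsLFP C) :
    ∃ (ι : Type v) (G : ι → C), (∀ i, IsCardinalPresentable.{v} (G i) ℵ₀) ∧
      (ObjectProperty.ofObj G).IsSeparating := by
  obtain ⟨-, ⟨ι, G, hGfp, hGcov⟩, hPres⟩ := hC
  refine ⟨ι, G, fun i ↦ isFinitelyPresentable_iff_isCardinalPresentable.1 (hGfp i),
    fun X Y f g hfg ↦ ?_⟩
  obtain ⟨J, _, _, D, c, hD, ⟨hc⟩, ⟨e⟩⟩ := hPres X
  rw [← cancel_epi e.hom]
  refine hc.hom_ext fun j ↦ ?_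
  obtain ⟨i, ⟨φ⟩⟩ := hGcov _ (hD j)
  rw [← cancel_epi φ.inv]
  simpa using hfg _ ⟨i⟩ (φ.inv ≫ c.ι.app j ≫ e.hom)

theorem mono_ι_app_of_monoDiagram (hG : (ObjectProperty.ofObj G).IsSeparating)
    [∀ i, IsCardinalPresentable.{v} (G i) ℵ₀] {J : Type v} [SmallCategory J] [IsFiltered J]
    {D : J ⥤ C} (hD : MonoDiagram D) {c : Cocone D} (hc : IsColimit c) (j : J) :
    Mono (c.ι.app j) := by
  have := (isCardinalFiltered_aleph0_iff J).2 inferInstance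
  refine (hG.mono_iff _).2 ?_
  rintro _ ⟨i⟩ a b hab
  obtain ⟨k, u, hu⟩ := IsCardinalPresentable.exists_eq_of_isColimit' ℵ₀ hc a b hab
  have := hD u
  exact (cancel_mono _).1 hu

theorem isFinitelyGenerated_iff_exists_hom (hG : (ObjectProperty.ofObj G).IsSeparating)
    [∀ i, IsCardinalPresentable.{v} (G i) ℵ₀] {A : C} :
    IsFinitelyGenerated A ↔ ∀ (J : Type v) [SmallCategory J] [IsFiltered J] (D : J ⥤ C),
      MonoDiagram D → ∀ (c : Cocone D), IsColimit c →
        ∀ f : A ⟶ c.pt, ∃ (j : J) (g : A ⟶ D.obj j), g ≫ c.ι.app j = f := by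
  refine ⟨fun hA J _ _ D hD c hc f ↦ ?_, fun hA J _ _ D hD c ⟨hc⟩ ↦ ⟨?_⟩⟩
  · obtain ⟨hc'⟩ := hA J D hD c ⟨hc⟩
    exact Types.jointly_surjective_of_isColimit hc' f
  · refine Types.FilteredColimit.isColimitOf' _ _
      (fun f ↦ (hA J D hD c hc f).imp fun _ ⟨g, hg⟩ ↦ ⟨g, hg.symm⟩) fun j f g hfg ↦ ⟨j, 𝟙 j, ?_⟩
    have := mono_ι_app_of_monoDiagram hG hD hc j
    simpa using (cancel_mono _).1 hfg

theorem isFinitelyGenerated_sigma (hG : (ObjectProperty.ofObj G).IsSeparating)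
    [∀ i, IsCardinalPresentable.{v} (G i) ℵ₀] {σ : Type v} [Finite σ] (A : σ → C)
    [HasCoproduct A] (hA : ∀ s, IsFinitelyGenerated (A s)) : IsFinitelyGenerated (∐ A) := by
  simp only [isFinitelyGenerated_iff_exists_hom hG] at hA ⊢
  intro J _ _ D hD c hc f
  choose j g hg using fun s ↦ hA s J D hD c hc (Sigma.ι A s ≫ f)
  have := (isCardinalFiltered_aleph0_iff.{v} J).2 inferInstance
  have hσ : HasCardinalLT σ Cardinal.aleph0.{v} := (hasCardinalLT_aleph0_iff σ).2 inferInstance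
  refine ⟨IsCardinalFiltered.max j hσ,
    Sigma.desc fun s ↦ g s ≫ D.map (IsCardinalFiltered.toMax j hσ s), Sigma.hom_ext _ _ fun s ↦ ?_⟩
  simp [hg]

theorem isFinitelyGenerated_of_llp_monomorphisms (hG : (ObjectProperty.ofObj G).IsSeparating)
    [∀ i, IsCardinalPresentable.{v} (G i) ℵ₀] {P I : C} (e : P ⟶ I)
    (he : (MorphismProperty.monomorphisms C).llp e) (hP : IsFinitelyGenerated P) :
    IsFinitelyGenerated I := by
  rw [isFinitelyGenerated_iff_exists_hom hG] at hP ⊢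
  intro J _ _ D hD c hc t
  obtain ⟨j, g, hg⟩ := hP J D hD c hc (e ≫ t)
  have := mono_ι_app_of_monoDiagram hG hD hc j
  have := he _ (MorphismProperty.monomorphisms.infer_property (c.ι.app j))
  have sq : CommSq g e (c.ι.app j) t := ⟨hg⟩
  exact ⟨j, sq.lift, sq.fac_right⟩

end Generators

section CoequalizingSequence

variable {C : Type u} [Category.{v} C] [HasColimits C] {ι : Type v} (G : ι → C) {X : C}

def EqualizedPairs (q : Over X) : Type v :=
  Σ i, {ab : (G i ⟶ q.left) × (G i ⟶ q.left) // ab.1 ≫ q.hom = ab.2 ≫ q.hom}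

noncomputable def EqualizedPairs.fst (q : Over X) :
    ∐ (fun s : EqualizedPairs G q ↦ G s.1) ⟶ q.left :=
  Sigma.desc fun s ↦ s.2.1.1

noncomputable def EqualizedPairs.snd (q : Over X) :
    ∐ (fun s : EqualizedPairs G q ↦ G s.1) ⟶ q.left :=
  Sigma.desc fun s ↦ s.2.1.2

theorem EqualizedPairs.fst_comp_hom (q : Over X) :
    EqualizedPairs.fst G q ≫ q.hom = EqualizedPairs.snd G q ≫ q.hom :=
  Sigma.hom_ext _ _ fun s ↦ by simpa [EqualizedPairs.fst, EqualizedPairs.snd] using s.2.2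

noncomputable def coequalizeStep (q : Over X) : Over X :=
  Over.mk (coequalizer.desc q.hom (EqualizedPairs.fst_comp_hom G q))

noncomputable def toCoequalizeStep (q : Over X) : q ⟶ coequalizeStep G q :=
  Over.homMk (coequalizer.π (EqualizedPairs.fst G q) (EqualizedPairs.snd G q))
    (coequalizer.π_desc _ _)

theorem llp_monomorphisms_toCoequalizeStep_left (q : Over X) :
    (MorphismProperty.monomorphisms C).llp (toCoequalizeStep G q).left := fun _ _ p (_ : Mono p) ↦
  StrongEpi.llp (f := coequalizer.π (EqualizedPairs.fst G q) (EqualizedPairs.snd G q)) p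

theorem toCoequalizeStep_left_eq (q : Over X) {i : ι} (a b : G i ⟶ q.left)
    (h : a ≫ q.hom = b ≫ q.hom) :
    a ≫ (toCoequalizeStep G q).left = b ≫ (toCoequalizeStep G q).left := by
  have := Sigma.ι (fun s : EqualizedPairs G q ↦ G s.1) ⟨i, (a, b), h⟩ ≫=
    coequalizer.condition (EqualizedPairs.fst G q) (EqualizedPairs.snd G q)
  simp only [EqualizedPairs.fst, EqualizedPairs.snd, colimit.ι_desc_assoc] at this
  exact this

noncomputable def coequalizeIter (q : Over X) : ℕ → Over X
  | 0 => q
  | n + 1 => coequalizeStep G (coequalizeIter q n)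

noncomputable def coequalizeSeq (q : Over X) : ℕ ⥤ Over X :=
  Functor.ofSequence fun n ↦ toCoequalizeStep G (coequalizeIter G q n)

theorem coequalizeSeq_map_succ (q : Over X) (n : ℕ) :
    (coequalizeSeq G q).map (homOfLE (Nat.le_succ n)) = toCoequalizeStep G (coequalizeIter G q n) :=
  Functor.ofSequence_map_homOfLE_succ _ n

theorem llp_monomorphisms_colimit_ι_zero_left (q : Over X) :
    (MorphismProperty.monomorphisms C).llp (colimit.ι (coequalizeSeq G q) 0).left := by
  intro _ _ p hp
  exact HasLiftingProperty.transfiniteComposition.hasLiftingProperty_ι_app_bot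
    (isColimitOfPreserves (Over.forget X) (colimit.isColimit (coequalizeSeq G q)))
    fun n _ ↦ by
      change HasLiftingProperty ((coequalizeSeq G q).map (homOfLE (Nat.le_succ n))).left p
      rw [coequalizeSeq_map_succ]
      exact llp_monomorphisms_toCoequalizeStep_left G _ p hp

theorem comp_colimit_ι_left_eq (q : Over X) {k : ℕ} {i : ι}
    (a b : G i ⟶ ((coequalizeSeq G q).obj k).left)
    (h : a ≫ ((coequalizeSeq G q).obj k).hom = b ≫ ((coequalizeSeq G q).obj k).hom) :
    a ≫ (colimit.ι (coequalizeSeq G q) k).left = b ≫ (colimit.ι (coequalizeSeq G q) k).left := by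
  have hk := colimit.w (coequalizeSeq G q) (homOfLE (Nat.le_succ k))
  rw [coequalizeSeq_map_succ] at hk
  rw [← hk]
  exact (Category.assoc _ _ _).symm.trans
    ((toCoequalizeStep_left_eq G _ a b h =≫ _).trans (Category.assoc _ _ _))

variable {G} in
theorem mono_colimit_coequalizeSeq_hom (hG : (ObjectProperty.ofObj G).IsSeparating)
    [∀ i, IsCardinalPresentable.{v} (G i) ℵ₀] (q : Over X) :
    Mono (colimit (coequalizeSeq G q)).hom := by
  set F := coequalizeSeq G q
  have hc := isColimitOfPreserves (Over.forget X) (colimit.isColimit F)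
  have := (isCardinalFiltered_aleph0_iff.{v} ℕ).2 inferInstance
  refine (hG.mono_iff _).2 ?_
  rintro _ ⟨i⟩ a b hab
  obtain ⟨n, (a : G i ⟶ (F.obj n).left), rfl⟩ :=
    IsCardinalPresentable.exists_hom_of_isColimit ℵ₀ hc a
  obtain ⟨m, (b : G i ⟶ (F.obj m).left), rfl⟩ :=
    IsCardinalPresentable.exists_hom_of_isColimit ℵ₀ hc b
  have push {k l : ℕ} (h : k ≤ l) (a : G i ⟶ (F.obj k).left) :
      a ≫ (colimit.ι F k).left = (a ≫ (F.map (homOfLE h)).left) ≫ (colimit.ι F l).left := by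
    rw [Category.assoc, ← Over.comp_left, colimit.w]
  change a ≫ (colimit.ι F n).left = b ≫ (colimit.ι F m).left
  change (a ≫ (colimit.ι F n).left) ≫ _ = (b ≫ (colimit.ι F m).left) ≫ _ at hab
  simp only [Category.assoc, Over.w] at hab
  rw [push (le_max_left n m) a, push (le_max_right n m) b]
  exact comp_colimit_ι_left_eq G q _ _ (by simpa [F] using hab)

end CoequalizingSequence

theorem exists_mono_factorization_of_isFinitelyGenerated {C : Type u} [Category.{v} C]
    [HasColimits C] {ι : Type v} {G : ι → C} (hG : (ObjectProperty.ofObj G).IsSeparating)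
    [∀ i, IsCardinalPresentable.{v} (G i) ℵ₀] {P X : C} (q : P ⟶ X)
    (hP : IsFinitelyGenerated P) :
    ∃ (I : C) (e : P ⟶ I) (r : I ⟶ X), Mono r ∧ IsFinitelyGenerated I ∧ e ≫ r = q :=
  ⟨_, _, _, mono_colimit_coequalizeSeq_hom hG (Over.mk q),
    isFinitelyGenerated_of_llp_monomorphisms hG _
      (llp_monomorphisms_colimit_ι_zero_left G (Over.mk q)) hP,
    Over.w (colimit.ι (coequalizeSeq G (Over.mk q)) 0)⟩

theorem finitelyBounded_coyoneda {C : Type u} [Category.{v} C] (hC : IsLFP C) {A : C}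
    (hA : IsFinitelyGenerated A) : FinitelyBounded (coyoneda.obj (op A)) := by
  intro X M₀ m₀ _ hM₀
  have : HasColimits C := hC.1
  obtain ⟨ι, G, _, hG⟩ := hC.exists_isSeparating
  have := Types.finite_of_isFinitelyGenerated hM₀
  obtain ⟨I, e, r, hr, hI, her⟩ := exists_mono_factorization_of_isFinitelyGenerated hG
    (Sigma.desc fun f : M₀ ↦ m₀ f) (isFinitelyGenerated_sigma hG _ fun _ ↦ hA)
  refine ⟨I, r, hr, hI, ↾fun f ↦ Sigma.ι (fun _ : M₀ ↦ A) f ≫ e, ?_⟩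
  ext f
  simp [her]

/-- If for every lfp category `B` and every monomorphism-preserving functor `F : C ⥤ B`
finite boundedness is equivalent to being finitary, then every finitely generated
object of `C` is finitely presentable. -/
theorem stmt_8 {C : Type u} [Category.{v} C] (hC : IsLFP C)
    (h : ∀ (B : Type (v + 1)) [Category.{v} B], IsLFP B →
      ∀ (F : C ⥤ B), F.PreservesMonomorphisms → (FinitelyBounded F ↔ IsFinitary F)) :
    ∀ A : C, IsFinitelyGenerated A → _root_.IsFinitelyPresentable A := fun A hA ↦
  (h (Type v) Types.isLFP (coyoneda.obj (op A)) inferInstance).1 (finitelyBounded_coyoneda hC hA)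
end

section
/- In every strictly locally finitely presentable category, every finitely generated object is finitely presentable. -/
open CategoryTheory Limits Opposite Function

universe w v u

/-- In a strictly lfp category, every finitely generated object is finitely presentable. -/
theorem stmt_9 {C : Type u} [Category.{v} C] (hC : StrictlyLFP C) :
    ∀ A : C, IsFinitelyGenerated A → _root_.IsFinitelyPresentable A := by
  intro A hA
  obtain ⟨u, ⟨Z, v, w, hZfp, hvw⟩, hu⟩ := hC.2 A A (𝟙 A) inferInstance hA
  rw [Category.id_comp] at hu
  subst hu
  intro J _ _ Dg cc hcc
  obtain ⟨hZcolim⟩ := hZfp J Dg cc hcc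
  refine ⟨Types.FilteredColimit.isColimitOf _ _ ?_ ?_⟩
  · intro h
    obtain ⟨j, g, hg⟩ := Types.jointly_surjective_of_isColimit hZcolim (w ≫ h)
    refine ⟨j, v ≫ g, ?_⟩
    have : g ≫ cc.ι.app j = w ≫ h := hg
    dsimp
    rw [Category.assoc, this, ← Category.assoc, hvw, Category.id_comp]
  · intro i j fi fj hij
    have h : (fi ≫ cc.ι.app i : A ⟶ cc.pt) = fj ≫ cc.ι.app j := hij
    have h2 : ((coyoneda.obj (op Z)).mapCocone cc).ι.app i (w ≫ fi) =
        ((coyoneda.obj (op Z)).mapCocone cc).ι.app j (w ≫ fj) := by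
      dsimp
      rw [Category.assoc, Category.assoc, h]
    obtain ⟨k, f, g, hfg⟩ :=
      (Types.FilteredColimit.isColimit_eq_iff _ hZcolim).mp h2
    refine ⟨k, f, g, ?_⟩
    have h3 : w ≫ fi ≫ Dg.map f = w ≫ fj ≫ Dg.map g := by
      simpa using hfg
    have h4 := congrArg (fun t => v ≫ t) h3
    rw [← Category.assoc, hvw, Category.id_comp] at h4
    rw [← Category.assoc, hvw, Category.id_comp] at h4
    simpa using h4
end

section
/- An lfp category A is strictly lfp if and only if for every morphism b : B → A with B finitely presentable there exist a finitely presentable object B' and morphisms b' : B' → A and f : A → B' such that b' ∘ f ∘ b = b. -/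
open CategoryTheory Limits Opposite Function

universe w v u

/-! In an lfp category every `b : B ⟶ A` has a (strong epi, mono)-factorization: coequalize,
ω times over, all pairs of maps out of finitely presentable objects that become equal in `A`;
finitely presentable objects see through the ω-colimit, so its map to `A` is monic. The image of
`b` is finitely generated when `B` is finitely presentable, and a finitely generated `M` is a
quotient of a finitely presentable object, being the directed union of the images of a
presentation of `M` by finitely presentable objects. A finitary endomorphism fixing the image of
`b` then yields `b' ∘ f`, and conversely `b' ∘ f` for `B ↠ M ↪ A` is a finitary endomorphism
fixing `M`. -/

section

variable {C : Type u} [Category.{v} C]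

def CategoryTheory.Limits.IsColimit.ofPrecomposeOfEpi {J : Type*} [Category J] {F G : J ⥤ C}
    (α : F ⟶ G) [∀ j, Epi (α.app j)] {c : Cocone G} (h : IsColimit ((Cocone.precompose α).obj c)) :
    IsColimit c where
  desc s := h.desc ((Cocone.precompose α).obj s)
  fac s j := by
    rw [← cancel_epi (α.app j)]
    simpa using h.fac ((Cocone.precompose α).obj s) j
  uniq s m hm := h.uniq ((Cocone.precompose α).obj s) m fun j => by simp [hm]

theorem IsLFP.hom_ext (hC : IsLFP C) {X Y : C} {f g : X ⟶ Y}
    (h : ∀ T : C, _root_.IsFinitelyPresentable T → ∀ t : T ⟶ X, t ≫ f = t ≫ g) : f = g := by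
  obtain ⟨J, _, _, D, c, hD, ⟨hc⟩, ⟨e⟩⟩ := hC.2.2 X
  rw [← cancel_epi e.hom]
  exact hc.hom_ext fun j => by simpa using h _ (hD j) (c.ι.app j ≫ e.hom)

theorem IsLFP.mono_of_cancel (hC : IsLFP C) {X Y : C} (m : X ⟶ Y)
    (h : ∀ T : C, _root_.IsFinitelyPresentable T → ∀ x y : T ⟶ X, x ≫ m = y ≫ m → x = y) :
    Mono m :=
  ⟨fun x y hxy => hC.hom_ext fun T hT t => h T hT _ _ (by simp [hxy])⟩

theorem IsFinitelyPresentable.isColimit_coyoneda_mapCocone {T : C}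
    (hT : _root_.IsFinitelyPresentable T) {J : Type} [SmallCategory J] [IsFiltered J]
    {F : J ⥤ C} {c : Cocone F} (hc : IsColimit c) :
    Nonempty (IsColimit ((coyoneda.obj (op T)).mapCocone c)) := by
  have := IsFiltered.of_equivalence (AsSmall.equiv.{0, 0, v} (C := J))
  obtain ⟨h⟩ := hT _ _ _ ⟨hc.whiskerEquivalence AsSmall.equiv.symm⟩
  exact ⟨IsColimit.ofWhiskerEquivalence AsSmall.equiv.symm h⟩

theorem IsLFP.exists_strongEpi_coequalizing (hC : IsLFP C) {A : C} (X : Over A) :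
    ∃ (Y : Over A) (e : X ⟶ Y), StrongEpi e.left ∧ ∀ T : C, _root_.IsFinitelyPresentable T →
      ∀ x y : T ⟶ X.left, x ≫ X.hom = y ≫ X.hom → x ≫ e.left = y ≫ e.left := by
  have := hC.1
  obtain ⟨ι, G, -, hG⟩ := hC.2.1
  -- coequalizing only the pairs out of the representatives `G i` keeps the coproduct small
  let R := Σ i, {p : (G i ⟶ X.left) × (G i ⟶ X.left) // p.1 ≫ X.hom = p.2 ≫ X.hom}
  let U : ∐ (fun r : R => G r.1) ⟶ X.left := Sigma.desc fun r => r.2.1.1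
  let V : ∐ (fun r : R => G r.1) ⟶ X.left := Sigma.desc fun r => r.2.1.2
  have hUV : U ≫ X.hom = V ≫ X.hom := Sigma.hom_ext _ _ fun r => by simpa [U, V] using r.2.2
  refine ⟨Over.mk (coequalizer.desc X.hom hUV), Over.homMk (coequalizer.π U V) (by simp),
    (inferInstance : StrongEpi (coequalizer.π U V)), fun T hT x y hxy => ?_⟩
  obtain ⟨i, ⟨φ⟩⟩ := hG T hT
  have hr : (φ.inv ≫ x) ≫ X.hom = (φ.inv ≫ y) ≫ X.hom := by simp [hxy]
  have := Sigma.ι (fun r : R => G r.1) ⟨i, (φ.inv ≫ x, φ.inv ≫ y), hr⟩ ≫= coequalizer.condition U V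
  simp only [U, V, colimit.ι_desc_assoc, Cofan.mk_ι_app, Category.assoc] at this
  simpa using φ.hom ≫= this

theorem IsLFP.nonempty_strongEpiMonoFactorisation_of_sequence (hC : IsLFP C) {F : ℕ ⥤ C}
    (c : Cocone F) (hF : ∀ n, StrongEpi (F.map (homOfLE (Nat.le_add_right n 1))))
    (hid : ∀ n, ∀ T : C, _root_.IsFinitelyPresentable T → ∀ x y : T ⟶ F.obj n,
      x ≫ c.ι.app n = y ≫ c.ι.app n →
        x ≫ F.map (homOfLE (Nat.le_add_right n 1)) = y ≫ F.map (homOfLE (Nat.le_add_right n 1))) :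
    Nonempty (StrongEpiMonoFactorisation (c.ι.app 0)) := by
  have := hC.1
  have hι : ∀ {i j} (hij : i ≤ j), colimit.ι F i = F.map (homOfLE hij) ≫ colimit.ι F j :=
    fun hij => (colimit.w F (homOfLE hij)).symm
  let m : colimit F ⟶ c.pt := colimit.desc F c
  have hm : ∀ n, colimit.ι F n ≫ m = c.ι.app n := colimit.ι_desc c
  have hepi : Epi (colimit.ι F 0) := ⟨fun t t' h => colimit.hom_ext fun n => by
    induction n with
    | zero => exact h
    | succ n ih =>
      rw [← cancel_epi (F.map (homOfLE (Nat.le_add_right n 1))), ← Category.assoc, ← hι, ih,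
        hι (Nat.le_add_right n 1), Category.assoc]⟩
  have hllp : ∀ ⦃U V : C⦄ (p : U ⟶ V) [Mono p], HasLiftingProperty (colimit.ι F 0) p :=
    fun U V p _ => HasLiftingProperty.transfiniteComposition.hasLiftingProperty_ι_app_bot
      (c := colimit.cocone F) (colimit.isColimit F) fun n _ => (hF n).llp p
  have hmono : Mono m := hC.mono_of_cancel m fun T hT x y hxy => by
    obtain ⟨h⟩ := hT.isColimit_coyoneda_mapCocone (colimit.isColimit F)
    obtain ⟨n, x, y, rfl, rfl⟩ := Types.FilteredColimit.jointly_surjective_of_isColimit₂ h x y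
    change x ≫ colimit.ι F n = y ≫ colimit.ι F n
    change (x ≫ colimit.ι F n) ≫ m = (y ≫ colimit.ι F n) ≫ m at hxy
    rw [Category.assoc, Category.assoc, hm] at hxy
    rw [hι (Nat.le_add_right n 1), reassoc_of% (hid n T hT x y hxy)]
  have : StrongEpi (colimit.ι F 0) := ⟨hepi, hllp⟩
  exact ⟨⟨⟨colimit F, m, colimit.ι F 0, hm 0⟩⟩⟩

theorem IsLFP.hasStrongEpiMonoFactorisations_s10 (hC : IsLFP C) :
    HasStrongEpiMonoFactorisations C where
  has_fac {B A} b := by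
    choose next e he hid using hC.exists_strongEpi_coequalizing (A := A)
    let X : ℕ → Over A := fun n => Nat.rec (Over.mk b) (fun _ => next) n
    let F := Functor.ofSequence (X := X) fun n => e (X n)
    have hF : ∀ n, (F ⋙ Over.forget A).map (homOfLE (Nat.le_add_right n 1)) = (e (X n)).left :=
      fun n => congrArg (Over.forget A).map (Functor.ofSequence_map_homOfLE_succ _ n)
    exact hC.nonempty_strongEpiMonoFactorisation_of_sequence ((Over.forgetCocone A).whisker F)
      (fun n => hF n ▸ he (X n)) fun n T hT x y hxy => by rw [hF]; exact hid (X n) T hT x y hxy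

theorem IsLFP.mono_ι_of_monoDiagram (hC : IsLFP C) {J : Type v} [SmallCategory J] [IsFiltered J]
    {E : J ⥤ C} (hE : MonoDiagram E) {c : Cocone E} (hc : IsColimit c) (k : J) :
    Mono (c.ι.app k) :=
  hC.mono_of_cancel _ fun T hT x y hxy => by
    obtain ⟨h⟩ := hT J E c ⟨hc⟩
    obtain ⟨l, f, hf⟩ := (Types.FilteredColimit.isColimit_eq_iff' h x y).1 hxy
    have := hE f
    exact (cancel_mono (E.map f)).1 hf

theorem IsFinitelyGenerated.of_strongEpi (hC : IsLFP C) {B I : C} (e : B ⟶ I) [StrongEpi e]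
    (hB : _root_.IsFinitelyPresentable B) : IsFinitelyGenerated I := by
  intro J _ _ E hE c ⟨hc⟩
  refine ⟨Types.FilteredColimit.isColimitOf' _ _ (fun h => ?_) (fun k d d' hdd' => ?_)⟩
  · obtain ⟨h'⟩ := hB J E c ⟨hc⟩
    obtain ⟨k, b, hb⟩ := Types.jointly_surjective_of_isColimit h' (e ≫ h)
    have := hC.mono_ι_of_monoDiagram hE hc k
    have sq : CommSq b e (c.ι.app k) h := ⟨hb⟩
    exact ⟨k, sq.lift, sq.fac_right.symm⟩
  · have := hC.mono_ι_of_monoDiagram hE hc k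
    exact ⟨k, 𝟙 k, by rw [(cancel_mono (c.ι.app k)).1 hdd']⟩

theorem IsFinitelyGenerated.exists_epi_of_isFinitelyPresentable (hC : IsLFP C) {M : C}
    (hM : IsFinitelyGenerated M) :
    ∃ (B : C) (q : B ⟶ M), _root_.IsFinitelyPresentable B ∧ Epi q := by
  have := hC.hasStrongEpiMonoFactorisations_s10
  obtain ⟨J, _, _, D, c, hD, ⟨hc⟩, ⟨e⟩⟩ := hC.2.2 M
  let c' := c.extend e.hom
  have hc' : IsColimit c' := hc.ofIsoColimit (c.extendIso e)
  let S : J ⥤ Subobject M :=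
    { obj j := imageSubobject (c'.ι.app j)
      map {j j'} f := homOfLE (by simpa using imageSubobject_comp_le (D.map f) (c'.ι.app j')) }
  let cS : Cocone (S ⋙ Subobject.underlying) := { pt := M, ι := { app j := (S.obj j).arrow } }
  let α : D ⟶ S ⋙ Subobject.underlying :=
    { app j := factorThruImageSubobject (c'.ι.app j)
      naturality j j' f := by
        rw [← cancel_mono (S.obj j').arrow]
        simp [S] }
  have : ∀ j, Epi (α.app j) := fun j => by
    simp only [α, factorThruImageSubobject]
    infer_instance
  have hS : IsColimit cS := IsColimit.ofPrecomposeOfEpi α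
    (hc'.ofIsoColimit (Cocone.ext (Iso.refl _) fun j => by simp [α, cS, S]))
  have hmono : MonoDiagram (S ⋙ Subobject.underlying) := fun j j' f =>
    mono_of_mono_fac (Subobject.underlying_arrow _)
  obtain ⟨h⟩ := hM J _ hmono cS ⟨hS⟩
  obtain ⟨j, s, hs⟩ := Types.jointly_surjective_of_isColimit h (𝟙 M)
  have : IsSplitEpi (S.obj j).arrow := ⟨⟨⟨s, hs⟩⟩⟩
  have := isIso_of_mono_of_isSplitEpi (S.obj j).arrow
  refine ⟨D.obj j, c'.ι.app j, hD j, ?_⟩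
  rw [← imageSubobject_arrow_comp (c'.ι.app j)]
  exact epi_comp (α.app j) (S.obj j).arrow

end

/-- An lfp category is strictly lfp iff for every morphism `b : B ⟶ A` with `B`
finitely presentable there are `b' : B' ⟶ A` with `B'` finitely presentable and
`f : A ⟶ B'` with `b ≫ f ≫ b' = b` (i.e. `b' ∘ f ∘ b = b`). -/
theorem stmt_10 {C : Type u} [Category.{v} C] (hC : IsLFP C) :
    StrictlyLFP C ↔
      ∀ (B A : C) (b : B ⟶ A), _root_.IsFinitelyPresentable B →
        ∃ (B' : C) (b' : B' ⟶ A) (f : A ⟶ B'),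
          _root_.IsFinitelyPresentable B' ∧ b ≫ f ≫ b' = b := by
  have := hC.hasStrongEpiMonoFactorisations_s10
  constructor
  · rintro ⟨-, hstrict⟩ B A b hB
    have hfg := IsFinitelyGenerated.of_strongEpi hC (factorThruImage b) hB
    obtain ⟨-, ⟨B', f, b', hB', rfl⟩, hfix⟩ := hstrict A (image b) (image.ι b) inferInstance hfg
    exact ⟨B', b', f, hB', by rw [← image.fac b, Category.assoc, hfix]⟩
  · refine fun H => ⟨hC, fun A M m _ hM => ?_⟩
    obtain ⟨B, q, hB, _⟩ := IsFinitelyGenerated.exists_epi_of_isFinitelyPresentable hC hM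
    obtain ⟨B', b', f, hB', hfix⟩ := H B A (q ≫ m) hB
    exact ⟨f ≫ b', ⟨B', f, b', hB', rfl⟩, by rwa [← cancel_epi q, ← Category.assoc]⟩
end

section
/- Let A be a semi-simple cocomplete category with, up to isomorphism, only finitely many simple objects, all of them finitely presentable. Then A is a strictly locally finitely presentable category. -/
open CategoryTheory Limits Opposite Function

universe w v u

/-- A simple object (atom): every subobject is invertible or has initial domain. -/
def SimpleObj {C : Type u} [Category.{v} C] (A : C) : Prop :=
  ∀ (S : C) (m : S ⟶ A), Mono m → IsIso m ∨ Nonempty (IsInitial S)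

/-- A category is semi-simple (atomic) if every object is a coproduct of simple objects. -/
def SemiSimple (C : Type u) [Category.{v} C] [HasColimits C] : Prop :=
  ∀ A : C, ∃ (ι : Type v) (f : ι → C), (∀ i, SimpleObj (f i)) ∧ Nonempty ((∐ f) ≅ A)


section AuxFP
variable {C : Type u} [Category.{v} C]

lemma fp_of_iso {X Y : C} (h : X ≅ Y) (hX : _root_.IsFinitelyPresentable X) :
    _root_.IsFinitelyPresentable Y := by
  intro J _ _ Dg cc hcc
  obtain ⟨hc⟩ := hX J Dg cc hcc
  exact ⟨IsColimit.mapCoconeEquiv (coyoneda.mapIso h.symm.op) hc⟩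

lemma filtered_sup {J : Type v} [SmallCategory J] [IsFiltered J] :
    ∀ {m : ℕ} (j : Fin m → J), ∃ (K : J), ∀ i, Nonempty (j i ⟶ K) := by
  intro m
  induction m with
  | zero => exact fun j => ⟨IsFiltered.nonempty.some, fun i => i.elim0⟩
  | succ m ih =>
    intro j
    obtain ⟨K, t⟩ := ih (j ∘ Fin.succ)
    exact ⟨IsFiltered.max K (j 0),
      Fin.cases ⟨IsFiltered.rightToMax _ _⟩ (fun a => ⟨(t a).some ≫ IsFiltered.leftToMax _ _⟩)⟩

lemma filtered_combine {J : Type v} [SmallCategory J] [IsFiltered J] {j j' : J} :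
    ∀ {m : ℕ} (k : Fin m → J) (f : ∀ i, j ⟶ k i) (g : ∀ i, j' ⟶ k i),
    ∃ (K : J) (F : j ⟶ K) (G : j' ⟶ K) (h : ∀ i, k i ⟶ K),
      ∀ i, f i ≫ h i = F ∧ g i ≫ h i = G := by
  intro m
  induction m with
  | zero =>
    intro k f g
    exact ⟨IsFiltered.max j j', IsFiltered.leftToMax _ _, IsFiltered.rightToMax _ _,
      fun i => i.elim0, fun i => i.elim0⟩
  | succ m ih =>
    intro k f g
    obtain ⟨K, F, G, h, hc⟩ := ih (k ∘ Fin.succ) (fun i => f i.succ) (fun i => g i.succ)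
    set L := IsFiltered.max K (k 0) with hL
    set a := IsFiltered.leftToMax K (k 0)
    set b := IsFiltered.rightToMax K (k 0)
    set c := IsFiltered.coeqHom (f 0 ≫ b) (F ≫ a)
    set d := IsFiltered.coeqHom (g 0 ≫ b ≫ c) (G ≫ a ≫ c)
    refine ⟨_, F ≫ a ≫ c ≫ d, G ≫ a ≫ c ≫ d,
      Fin.cases (b ≫ c ≫ d) (fun i => h i ≫ a ≫ c ≫ d), ?_⟩
    refine Fin.cases ⟨?_, ?_⟩ (fun i => ⟨?_, ?_⟩)
    · simp only [Fin.cases_zero]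
      have := IsFiltered.coeq_condition (f 0 ≫ b) (F ≫ a)
      rw [reassoc_of% this]
    · simp only [Fin.cases_zero]
      have := IsFiltered.coeq_condition (g 0 ≫ b ≫ c) (G ≫ a ≫ c)
      simp only [Category.assoc] at this ⊢
      rw [← this]
    · simp only [Fin.cases_succ]
      rw [reassoc_of% (hc i).1]
    · simp only [Fin.cases_succ]
      rw [reassoc_of% (hc i).2]

lemma fp_coproduct [HasColimits C] {m : ℕ} (H : Fin m → C)
    (h : ∀ i, _root_.IsFinitelyPresentable (H i)) : _root_.IsFinitelyPresentable (∐ H) := by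
  intro J _ _ Dg cc hcc
  constructor
  apply Types.FilteredColimit.isColimitOf
  · intro x
    have hx : ∀ i : Fin m, ∃ (j : J) (y : H i ⟶ Dg.obj j),
        y ≫ cc.ι.app j = Sigma.ι H i ≫ x := by
      intro i
      obtain ⟨j, y, hy⟩ := Types.jointly_surjective _ ((h i J Dg cc hcc).some)
        (Sigma.ι H i ≫ x)
      exact ⟨j, y, hy⟩
    choose j y hy using hx
    obtain ⟨K, t⟩ := filtered_sup j
    refine ⟨K, Sigma.desc (fun i => y i ≫ Dg.map (t i).some), ?_⟩
    show x = Sigma.desc (fun i => y i ≫ Dg.map (t i).some) ≫ cc.ι.app K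
    apply Sigma.hom_ext
    intro i
    rw [← Category.assoc, Limits.Sigma.ι_desc, Category.assoc, cc.w, hy]
  · intro i j xi xj hx
    replace hx : xi ≫ cc.ι.app i = xj ≫ cc.ι.app j := hx
    have key : ∀ a : Fin m, ∃ (K : J) (fa : i ⟶ K) (ga : j ⟶ K),
        Sigma.ι H a ≫ xi ≫ Dg.map fa = Sigma.ι H a ≫ xj ≫ Dg.map ga := by
      intro a
      have heq : ((coyoneda.obj (op (H a))).mapCocone cc).ι.app i (Sigma.ι H a ≫ xi)
          = ((coyoneda.obj (op (H a))).mapCocone cc).ι.app j (Sigma.ι H a ≫ xj) := by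
        show (Sigma.ι H a ≫ xi) ≫ cc.ι.app i = (Sigma.ι H a ≫ xj) ≫ cc.ι.app j
        rw [Category.assoc, Category.assoc, hx]
      obtain ⟨K, fa, ga, hfg⟩ :=
        (Types.FilteredColimit.isColimit_eq_iff _ ((h a J Dg cc hcc).some)).mp heq
      refine ⟨K, fa, ga, ?_⟩
      have : (Sigma.ι H a ≫ xi) ≫ Dg.map fa = (Sigma.ι H a ≫ xj) ≫ Dg.map ga := hfg
      simpa using this
    choose K fa ga hfg using key
    obtain ⟨K', F, G, hmap, hcomm⟩ := filtered_combine K fa ga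
    refine ⟨K', F, G, ?_⟩
    show xi ≫ Dg.map F = xj ≫ Dg.map G
    apply Sigma.hom_ext
    intro a
    rw [← (hcomm a).1, ← (hcomm a).2, Dg.map_comp, Dg.map_comp]
    have := congrArg (· ≫ Dg.map (hmap a)) (hfg a)
    simpa using this

lemma fp_sub [HasColimits C] {ι' : Type v} [Fintype ι'] (H : ι' → C)
    (h : ∀ i, _root_.IsFinitelyPresentable (H i)) : _root_.IsFinitelyPresentable (∐ H) := by
  set e := Fintype.equivFin ι' with he
  have hfp := fp_coproduct (fun i : Fin (Fintype.card ι') => H (e.symm i)) (fun i => h _)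
  exact fp_of_iso
    (Sigma.whiskerEquiv e (fun j => eqToIso (by rw [Equiv.symm_apply_apply]))).symm hfp
end AuxFP

section SubCoprod
variable {C : Type u} [Category.{v} C] [HasColimits C]
variable {κ : Type v} [DecidableEq κ] (g : κ → C) (R : Finset κ)

abbrev SubIdx : Type v := {F : Finset κ // R ≤ F}

instance : Nonempty (SubIdx R) := ⟨⟨R, le_refl R⟩⟩

instance : IsDirected (SubIdx R) (· ≤ ·) :=
  ⟨fun F G => ⟨⟨F.1 ⊔ G.1, le_trans F.2 le_sup_left⟩,
    by exact le_sup_left, by exact le_sup_right⟩⟩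

instance : IsFiltered (SubIdx R) := inferInstance

/-- The diagram of finite subcoproducts containing `R`. -/
@[simps]
noncomputable def subDiag : SubIdx R ⥤ C where
  obj F := ∐ (fun (j : {x // x ∈ F.1}) => g j.1)
  map {F F'} h := Sigma.desc (fun j =>
    Sigma.ι (fun (j : {x // x ∈ F'.1}) => g j.1) ⟨j.1, (leOfHom h) j.2⟩)
  map_id F := by
    apply Sigma.hom_ext; intro j; simp
  map_comp {F F' F''} h h' := by
    apply Sigma.hom_ext; intro j; simp

@[simps]
noncomputable def subCocone : Cocone (subDiag g R) where
  pt := ∐ g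
  ι := {
    app := fun F => Sigma.desc (fun j => Sigma.ι g j.1)
    naturality := fun F F' h => by
      apply Sigma.hom_ext; intro j; simp [subDiag] }

/-- Index containing `R` and one extra element. -/
def sIdx (j : κ) : SubIdx R := ⟨insert j R, Finset.subset_insert j R⟩

lemma mem_sIdx (j : κ) : j ∈ (sIdx R j).1 := by
  exact Finset.mem_insert_self j R

noncomputable def subIsColimit : IsColimit (subCocone g R) where
  desc s := Sigma.desc (fun j =>
    Sigma.ι (fun (i : {x // x ∈ (sIdx R j).1}) => g i.1) ⟨j, mem_sIdx R j⟩ ≫ s.ι.app (sIdx R j))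
  fac s F := by
    apply Sigma.hom_ext
    rintro ⟨j, hj⟩
    erw [subCocone_ι_app, ← Category.assoc, Limits.Sigma.ι_desc, Limits.Sigma.ι_desc]
    have hle1 : sIdx R j ≤ ⟨(sIdx R j).1 ⊔ F.1, le_trans (sIdx R j).2 le_sup_left⟩ := by
      exact le_sup_left
    have hle2 : F ≤ ⟨(sIdx R j).1 ⊔ F.1, le_trans (sIdx R j).2 le_sup_left⟩ := by
      exact le_sup_right
    rw [← s.w (homOfLE hle1), ← s.w (homOfLE hle2)]
    erw [← Category.assoc, ← Category.assoc]
    congr 1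
    simp only [subDiag_map, Limits.Sigma.ι_desc]
    erw [Limits.Sigma.ι_desc, Limits.Sigma.ι_desc]
  uniq s m hm := by
    apply Sigma.hom_ext
    intro j
    rw [Limits.Sigma.ι_desc]
    have : Sigma.ι g j =
        Sigma.ι (fun (i : {x // x ∈ (sIdx R j).1}) => g i.1) ⟨j, mem_sIdx R j⟩ ≫
          (subCocone g R).ι.app (sIdx R j) := by
      erw [subCocone_ι_app, Limits.Sigma.ι_desc]
    erw [this, Category.assoc, hm (sIdx R j)]

variable (rep : κ → κ) (hrep : ∀ j, rep j ∈ R) (φ : ∀ j, g j ⟶ g (rep j))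

/-- Retraction of the canonical map from a subcoproduct to the full coproduct. -/
noncomputable def subRetr (F : SubIdx R) : (∐ g) ⟶ (subDiag g R).obj F := by
  classical
  exact Sigma.desc (fun j =>
    if hj : j ∈ F.1 then Sigma.ι (fun (i : {x // x ∈ F.1}) => g i.1) ⟨j, hj⟩
    else φ j ≫ Sigma.ι (fun (i : {x // x ∈ F.1}) => g i.1) ⟨rep j, F.2 (hrep j)⟩)

lemma subRetr_comp (F : SubIdx R) :
    (subCocone g R).ι.app F ≫ subRetr g R rep hrep φ F = 𝟙 _ := by
  classical
  apply Sigma.hom_ext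
  rintro ⟨j, hj⟩
  erw [subCocone_ι_app, ← Category.assoc, Limits.Sigma.ι_desc, subRetr, Limits.Sigma.ι_desc,
    dif_pos hj]
  exact (Category.comp_id _).symm

include rep hrep φ in
lemma subMonoDiagram : MonoDiagram (subDiag g R) := by
  intro F F' h
  have hsplit : (subDiag g R).map h ≫
      ((subCocone g R).ι.app F' ≫ subRetr g R rep hrep φ F) = 𝟙 _ := by
    erw [← Category.assoc, Cocone.w, subRetr_comp]
  haveI : IsSplitMono ((subDiag g R).map h) := IsSplitMono.mk' ⟨_, hsplit⟩
  exact inferInstance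

lemma fp_subDiag (hfpg : ∀ j, _root_.IsFinitelyPresentable (g j)) (F : SubIdx R) :
    _root_.IsFinitelyPresentable ((subDiag g R).obj F) :=
  fp_sub _ (fun j => hfpg j.1)
end SubCoprod

lemma build_reps {κ : Type v} [DecidableEq κ] {n : ℕ} (σ : κ → Fin n) :
    ∃ (R : Finset κ) (rep : κ → κ), (∀ j, rep j ∈ R) ∧ ∀ j, σ (rep j) = σ j := by
  classical
  set S : Finset (Fin n) := Finset.univ.filter (fun k => ∃ j, σ j = k) with hS
  have hSmem : ∀ k : {k // k ∈ S}, ∃ j, σ j = k.1 := fun k => (Finset.mem_filter.mp k.2).2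
  choose r hr using hSmem
  refine ⟨S.attach.image r, fun j => r ⟨σ j, ?_⟩, fun j => ?_, fun j => ?_⟩
  · exact Finset.mem_filter.mpr ⟨Finset.mem_univ _, ⟨j, rfl⟩⟩
  · exact Finset.mem_image.mpr ⟨_, Finset.mem_attach _ _, rfl⟩
  · exact hr _
/-- A semi-simple cocomplete category with only finitely many simple objects up to
isomorphism, all of them finitely presentable, is strictly lfp. -/
theorem stmt_13 {C : Type u} [Category.{v} C] [HasColimits C] (hss : SemiSimple C)
    (hfin : ∃ (n : ℕ) (G : Fin n → C), (∀ i, SimpleObj (G i)) ∧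
      ∀ X : C, SimpleObj X → ∃ i, Nonempty (X ≅ G i))
    (hfp : ∀ X : C, SimpleObj X → _root_.IsFinitelyPresentable X) :
    StrictlyLFP C := by
  classical
  obtain ⟨n, G, hGsimp, hGrep⟩ := hfin
  constructor
  · refine ⟨inferInstance, ?_, ?_⟩
    · -- a small family of fp objects representing all fp objects
      refine ⟨ULift.{v} (Σ m : ℕ, Fin m → Fin n),
        fun i => ∐ (fun a : Fin i.down.1 => G (i.down.2 a)),
        fun i => fp_coproduct _ (fun a => hfp _ (hGsimp _)), ?_⟩
      intro X hX
      obtain ⟨κ, g, hgsimp, ⟨e⟩⟩ := hss X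
      haveI := Classical.decEq κ
      choose σ hσ using fun j => hGrep (g j) (hgsimp j)
      have isoσ : ∀ j, g j ≅ G (σ j) := fun j => (hσ j).some
      obtain ⟨R, rep, hrep, hrepσ⟩ := build_reps σ
      have φ : ∀ j, g j ⟶ g (rep j) := fun j =>
        (isoσ j).hom ≫ eqToHom (congrArg G (hrepσ j).symm) ≫ (isoσ (rep j)).inv
      obtain ⟨hmap⟩ := hX (SubIdx R) (subDiag g R) (subCocone g R) ⟨subIsColimit g R⟩
      obtain ⟨F, s, hs⟩ := Types.jointly_surjective _ hmap e.inv
      replace hs : s ≫ (subCocone g R).ι.app F = e.inv := hs.symm ▸ rfl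
      set p := (subCocone g R).ι.app F ≫ e.hom with hp
      haveI : IsSplitEpi p := IsSplitEpi.mk' ⟨s, by
        erw [hp, ← Category.assoc, hs, e.inv_hom_id]⟩
      haveI : Mono p := by
        haveI : IsSplitMono ((subCocone g R).ι.app F) :=
          IsSplitMono.mk' ⟨subRetr g R rep hrep φ F, subRetr_comp g R rep hrep φ F⟩
        exact @mono_comp _ _ _ _ _ _ _ _ (inferInstance : Mono e.hom)
      haveI : IsIso p := isIso_of_mono_of_isSplitEpi p
      set eF := Fintype.equivFin {x // x ∈ F.1} with heF
      refine ⟨⟨⟨Fintype.card {x // x ∈ F.1}, fun i => σ (eF.symm i).1⟩⟩, ⟨?_⟩⟩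
      exact (asIso p).symm ≪≫ Sigma.whiskerEquiv eF
        (fun j => eqToIso (by simp) ≪≫ (isoσ j.1).symm)
    · -- every object is a filtered colimit of fp objects
      intro X
      obtain ⟨κ, g, hgsimp, ⟨e⟩⟩ := hss X
      haveI := Classical.decEq κ
      exact ⟨SubIdx (∅ : Finset κ), inferInstance, inferInstance, subDiag g ∅,
        subCocone g ∅, fun F => fp_subDiag g ∅ (fun j => hfp _ (hgsimp j)) F,
        ⟨subIsColimit g ∅⟩, ⟨e⟩⟩
  · -- the strictness condition
    intro A M m hm hMfg
    obtain ⟨κ, g, hgsimp, ⟨e⟩⟩ := hss A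
    haveI := Classical.decEq κ
    choose σ hσ using fun j => hGrep (g j) (hgsimp j)
    have isoσ : ∀ j, g j ≅ G (σ j) := fun j => (hσ j).some
    obtain ⟨R, rep, hrep, hrepσ⟩ := build_reps σ
    have φ : ∀ j, g j ⟶ g (rep j) := fun j =>
      (isoσ j).hom ≫ eqToHom (congrArg G (hrepσ j).symm) ≫ (isoσ (rep j)).inv
    obtain ⟨hmap⟩ := hMfg (SubIdx R) (subDiag g R)
      (subMonoDiagram g R rep hrep φ) (subCocone g R) ⟨subIsColimit g R⟩
    obtain ⟨F, s, hs⟩ := Types.jointly_surjective _ hmap (m ≫ e.inv)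
    replace hs : s ≫ (subCocone g R).ι.app F = m ≫ e.inv := hs.symm ▸ rfl
    refine ⟨e.inv ≫ subRetr g R rep hrep φ F ≫ (subCocone g R).ι.app F ≫ e.hom,
      ⟨(subDiag g R).obj F, e.inv ≫ subRetr g R rep hrep φ F,
        (subCocone g R).ι.app F ≫ e.hom,
        fp_subDiag g R (fun j => hfp _ (hgsimp j)) F,
        by simp only [Category.assoc]⟩, ?_⟩
    calc m ≫ e.inv ≫ subRetr g R rep hrep φ F ≫ (subCocone g R).ι.app F ≫ e.hom
        = (s ≫ (subCocone g R).ι.app F) ≫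
            subRetr g R rep hrep φ F ≫ (subCocone g R).ι.app F ≫ e.hom := by
          rw [hs]; exact (Category.assoc _ _ _).symm
      _ = s ≫ ((subCocone g R).ι.app F ≫ subRetr g R rep hrep φ F) ≫
            (subCocone g R).ι.app F ≫ e.hom := by erw [Category.assoc ((subCocone g R).ι.app F)]; exact Category.assoc _ _ _
      _ = s ≫ (subCocone g R).ι.app F ≫ e.hom := by
          rw [subRetr_comp g R rep hrep φ F, Category.id_comp]
      _ = (m ≫ e.inv) ≫ e.hom := by rw [← hs]; exact (Category.assoc _ _ _).symm
      _ = m := by rw [Category.assoc, e.inv_hom_id, Category.comp_id]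
end

section
/- Let A be an lfp category in which every subobject is pure. If every finitely generated object of A is finitely presentable, then A is strictly lfp. -/
open CategoryTheory Limits Opposite Function

universe w v u

/-- A pure subobject: a monomorphism `b : B ⟶ A` which is a filtered colimit, in the
slice category over `A`, of split subobjects of `A`. -/
def PureSubobject {C : Type u} [Category.{v} C] {A B : C} (b : B ⟶ A) : Prop :=
  ∃ (J : Type v) (_ : SmallCategory J) (_ : IsFiltered J) (Dg : J ⥤ Over A)
    (cc : Cocone Dg), Nonempty (IsColimit cc) ∧ (∀ j : J, IsSplitMono ((Dg.obj j).hom)) ∧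
      Nonempty (cc.pt ≅ Over.mk b)

/-
A finitely generated pure subobject `b : B ⟶ A` is split: the filtered diagram of split
subobjects of `A` with colimit `b` consists of monomorphisms, so the identity of `B` factors
through some stage `s : S ⟶ A`, i.e. `b = g ≫ s` with `g : B ⟶ S` a section of the colimit
injection `S ⟶ B`; composing that injection with a retraction of `s` gives a retraction of `b`.
Hence `retraction b ≫ b` is an endomorphism of `A` fixing `b` and factoring through `B`,
which is finitely presentable once finitely generated objects are.
-/

section

variable {C : Type u} [Category.{v} C]

theorem IsFinitelyGenerated.exists_lift {X : C} (hX : IsFinitelyGenerated X)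
    {J : Type v} [SmallCategory J] [IsFiltered J] {Dg : J ⥤ C} (hDg : MonoDiagram Dg)
    {cc : Cocone Dg} (hcc : IsColimit cc) (f : X ⟶ cc.pt) :
    ∃ (j : J) (g : X ⟶ Dg.obj j), g ≫ cc.ι.app j = f := by
  obtain ⟨hX'⟩ := hX J Dg hDg cc ⟨hcc⟩
  exact Types.jointly_surjective _ hX' f

theorem monoDiagram_comp_forget {A : C} {J : Type*} [Category J] (Dg : J ⥤ Over A)
    (hDg : ∀ j, Mono (Dg.obj j).hom) : MonoDiagram (Dg ⋙ Over.forget A) := fun i j f => by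
  have : Mono ((Dg.map f).left ≫ (Dg.obj j).hom) := by rw [Over.w]; exact hDg i
  exact mono_of_mono (Dg.map f).left (Dg.obj j).hom

theorem PureSubobject.isSplitMono_of_isFinitelyGenerated [HasColimits C] {A B : C} {b : B ⟶ A}
    (hb : PureSubobject b) (hB : IsFinitelyGenerated B) : IsSplitMono b := by
  obtain ⟨J, _, _, Dg, cc, ⟨hcc⟩, hsplit, ⟨e⟩⟩ := hb
  obtain ⟨j, (g : B ⟶ (Dg.obj j).left), hg⟩ := hB.exists_lift
    (monoDiagram_comp_forget Dg fun j => inferInstance)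
    (isColimitOfPreserves (Over.forget A) hcc) e.inv.left
  change g ≫ (cc.ι.app j).left = e.inv.left at hg
  have hgs : b = g ≫ (Dg.obj j).hom := by
    rw [← Over.w (cc.ι.app j), ← Category.assoc, hg]
    exact (Over.w e.inv).symm
  refine ⟨⟨retraction (Dg.obj j).hom ≫ (cc.ι.app j).left ≫ e.hom.left, ?_⟩⟩
  nth_rw 1 [hgs]
  rw [Category.assoc, IsSplitMono.id_assoc, ← Category.assoc, hg, ← Over.comp_left,
    e.inv_hom_id]
  rfl

end

/-- If all subobjects in an lfp category are pure and every finitely generated object is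
finitely presentable, then the category is strictly lfp. -/
theorem stmt_14 {C : Type u} [Category.{v} C] (hC : IsLFP C)
    (hpure : ∀ (A B : C) (b : B ⟶ A), Mono b → PureSubobject b)
    (hfgfp : ∀ X : C, IsFinitelyGenerated X → _root_.IsFinitelyPresentable X) :
    StrictlyLFP C := by
  refine ⟨hC, fun A M m hm hM => ?_⟩
  have : HasColimits C := hC.1
  have := (hpure A M m hm).isSplitMono_of_isFinitelyGenerated hM
  exact ⟨retraction m ≫ m, ⟨M, _, _, hfgfp M hM, rfl⟩, by simp⟩
end
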